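/- arXiv:1803.03770 — 7 statements merged into one kernel-verified Lean document; each statement's English description precedes it below -/
import Mathlib

section
/- Suppose h, f, g : ℝ → ℝ are continuous functions such that: (C1) there exists K > 1 with |h(x) - h(y)| ≥ K|x - y| for all x, y; (C2) there exists α > 0 with |f(x) - f(y)| ≥ α|x - y| for all x, y; (C3) g is bounded and Lipschitz with Lipschitz constant at most β. If β ≤ (1/4)α²K² when α < 2(1 - 1/K), or β < (K-1)(αK - K + 1) when α ≥ 2(1 - 1/K), then the functional equation φ(φ(x)) = h(φ(f(x))) + g(x) for all x ∈ ℝ has a bounded continuous solution φ : ℝ → ℝ. -/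
/-!
Since `h` and `f` are continuous and expanding, they are bijections of `ℝ` whose inverses are
Lipschitz with constants `1/K` and `1/α`, and the equation is equivalent to the fixed-point
problem `φ = h⁻¹ ∘ (φ ∘ φ - g) ∘ f⁻¹`. This operator maps the closed set of `L`-Lipschitz
functions of sup norm at most `R` into itself as soon as `(L² + β) / (α K) ≤ L` (and `R` is
large), and it is a contraction there with constant `(L + 1) / K`, because
`|φ (φ u) - ψ (ψ u)| ≤ (L + 1) ‖φ - ψ‖`. The conditions on `β` are exactly what is needed to
find `L ≥ 0` with `L + 1 < K` and `L² - α K L + β ≤ 0`; Banach's fixed-point theorem then gives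
the solution.
-/

open Filter Topology Set Function NNReal BoundedContinuousFunction

section Expanding

variable {f : ℝ → ℝ} {c : ℝ}

lemma antilipschitzWith_of_expanding (hc : 0 < c) (hf : ∀ x y, c * |x - y| ≤ |f x - f y|) :
    AntilipschitzWith (Real.toNNReal c⁻¹) f :=
  AntilipschitzWith.of_le_mul_dist fun x y => by
    rw [Real.coe_toNNReal _ (inv_nonneg.2 hc.le), Real.dist_eq, Real.dist_eq, inv_mul_eq_div,
      le_div_iff₀' hc]
    exact hf x y

lemma tendsto_atTop_of_strictMono_of_expanding (hc : 0 < c) (hmono : StrictMono f)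
    (hf : ∀ x y, c * |x - y| ≤ |f x - f y|) : Tendsto f atTop atTop := by
  refine tendsto_atTop_mono' _ ?_
    (tendsto_atTop_add_const_left _ (f 0) (tendsto_id.const_mul_atTop hc))
  filter_upwards [eventually_ge_atTop 0] with x hx
  have := hf x 0
  rw [sub_zero, abs_of_nonneg hx, abs_of_nonneg (sub_nonneg.2 (hmono.monotone hx))] at this
  simp only [id]
  linarith

lemma surjective_of_strictMono_of_expanding (hc : 0 < c) (hcont : Continuous f)
    (hmono : StrictMono f) (hf : ∀ x y, c * |x - y| ≤ |f x - f y|) : Surjective f := by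
  refine hcont.surjective (tendsto_atTop_of_strictMono_of_expanding hc hmono hf) ?_
  have hreflect : Tendsto (fun x => -f (-x)) atTop atTop := by
    refine tendsto_atTop_of_strictMono_of_expanding hc
      (fun x y hxy => neg_lt_neg (hmono (neg_lt_neg hxy))) fun x y => ?_
    simpa only [neg_sub_neg] using hf (-y) (-x)
  simpa [Function.comp_def] using
    tendsto_neg_atTop_atBot.comp (hreflect.comp tendsto_neg_atBot_atTop)

lemma surjective_of_expanding (hc : 0 < c) (hcont : Continuous f)
    (hf : ∀ x y, c * |x - y| ≤ |f x - f y|) : Surjective f := by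
  rcases hcont.strictMono_of_inj (antilipschitzWith_of_expanding hc hf).injective with
    hmono | hanti
  · exact surjective_of_strictMono_of_expanding hc hcont hmono hf
  · intro y
    obtain ⟨x, hx⟩ := surjective_of_strictMono_of_expanding hc hcont.neg hanti.neg
      (fun x y => by simpa only [Pi.neg_apply, neg_sub_neg, abs_sub_comm y x] using hf y x) (-y)
    exact ⟨x, neg_injective hx⟩

lemma exists_lipschitzWith_inverse_of_expanding (hc : 0 < c) (hcont : Continuous f)
    (hf : ∀ x y, c * |x - y| ≤ |f x - f y|) :
    ∃ finv : ℝ → ℝ, LeftInverse finv f ∧ RightInverse finv f ∧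
      LipschitzWith (Real.toNNReal c⁻¹) finv := by
  have hanti := antilipschitzWith_of_expanding hc hf
  have hsurj := surjective_of_expanding hc hcont hf
  exact ⟨surjInv hsurj, leftInverse_surjInv ⟨hanti.injective, hsurj⟩, rightInverse_surjInv hsurj,
    hanti.to_rightInverse (rightInverse_surjInv hsurj)⟩

end Expanding

lemma exists_add_one_lt_and_sq_add_le {K α β : ℝ} (hK : 1 < K) (hα : 0 < α)
    (hcond1 : α < 2 * (1 - 1 / K) → β ≤ (1 / 4) * α ^ 2 * K ^ 2)
    (hcond2 : 2 * (1 - 1 / K) ≤ α → β < (K - 1) * (α * K - K + 1)) :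
    ∃ L : ℝ≥0, (L : ℝ) + 1 < K ∧ (L : ℝ) ^ 2 + β ≤ α * K * L := by
  have hK0 : 0 < K := one_pos.trans hK
  rcases lt_or_ge α (2 * (1 - 1 / K)) with hsmall | hlarge
  · have hαK : α * K < 2 * (K - 1) := by
      calc α * K < 2 * (1 - 1 / K) * K := mul_lt_mul_of_pos_right hsmall hK0
        _ = 2 * (K - 1) := by field_simp
    have hq : (α * K / 2) ^ 2 + β ≤ α * K * (α * K / 2) := by nlinarith [hcond1 hsmall]
    exact ⟨⟨α * K / 2, by positivity⟩, show α * K / 2 + 1 < K by linarith, hq⟩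
  · have hneg : (K - 1) ^ 2 + β < α * K * (K - 1) := by nlinarith [hcond2 hlarge]
    have hnear : ∀ᶠ L in 𝓝[<] (K - 1), 0 < L ∧ L ^ 2 + β < α * K * L :=
      nhdsWithin_le_nhds ((eventually_gt_nhds (by linarith)).and
        (ContinuousAt.eventually_lt (by fun_prop) (by fun_prop) hneg))
    obtain ⟨L, ⟨hL0, hLq⟩, hLK⟩ := (hnear.and self_mem_nhdsWithin).exists
    exact ⟨⟨L, hL0.le⟩, show L + 1 < K by linarith [show L < K - 1 from hLK], hLq.le⟩

lemma BoundedContinuousFunction.dist_apply_apply_le {α : Type*} [PseudoMetricSpace α]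
    {φ : α →ᵇ α} {L : ℝ≥0} (hφ : LipschitzWith L φ) (ψ : α →ᵇ α) (x : α) :
    dist (φ (φ x)) (ψ (ψ x)) ≤ (L + 1) * dist φ ψ :=
  calc dist (φ (φ x)) (ψ (ψ x)) ≤ dist (φ (φ x)) (φ (ψ x)) + dist (φ (ψ x)) (ψ (ψ x)) :=
        dist_triangle _ _ _
    _ ≤ L * dist φ ψ + dist φ ψ :=
        add_le_add ((hφ.dist_le_mul _ _).trans (by gcongr; exact dist_coe_le_dist x))
          (dist_coe_le_dist _)
    _ = (L + 1) * dist φ ψ := by ring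

section IterativeEquation

variable {E : Type*} [NormedAddCommGroup E] {κ : ℝ≥0} {hinv : E → E}
  (hhinv : LipschitzWith κ hinv) (finv : C(E, E)) (g : E →ᵇ E)

/-- With `hinv = h⁻¹` and `finv = f⁻¹`, the fixed points are the solutions of
`φ ∘ φ = h ∘ φ ∘ f + g`. -/
def iterativeEquationOperator (φ : E →ᵇ E) : E →ᵇ E :=
  ((φ.compContinuous φ.toContinuousMap - g).compContinuous finv).comp hinv hhinv

variable {finv g}

@[simp]
lemma iterativeEquationOperator_apply (φ : E →ᵇ E) (y : E) :
    iterativeEquationOperator hhinv finv g φ y = hinv (φ (φ (finv y)) - g (finv y)) :=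
  rfl

lemma lipschitzWith_iterativeEquationOperator {L a β : ℝ≥0} {φ : E →ᵇ E}
    (hφ : LipschitzWith L φ) (hfinv : LipschitzWith a finv) (hg : LipschitzWith β g) :
    LipschitzWith (κ * ((L * L + β) * a)) (iterativeEquationOperator hhinv finv g φ) :=
  hhinv.comp (((hφ.comp hφ).sub hg).comp hfinv)

lemma norm_iterativeEquationOperator_le (φ : E →ᵇ E) :
    ‖iterativeEquationOperator hhinv finv g φ‖ ≤ ‖hinv 0‖ + κ * (‖φ‖ + ‖g‖) := by
  refine (norm_le (by positivity)).2 fun y => ?_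
  rw [iterativeEquationOperator_apply]
  calc ‖hinv (φ (φ (finv y)) - g (finv y))‖
      ≤ ‖hinv 0‖ + ‖hinv (φ (φ (finv y)) - g (finv y)) - hinv 0‖ := norm_le_insert' _ _
    _ ≤ ‖hinv 0‖ + κ * ‖φ (φ (finv y)) - g (finv y)‖ := by
        gcongr
        simpa only [dist_eq_norm, sub_zero] using
          hhinv.dist_le_mul (φ (φ (finv y)) - g (finv y)) 0
    _ ≤ ‖hinv 0‖ + κ * (‖φ‖ + ‖g‖) := by
        gcongr
        exact (norm_sub_le _ _).trans (add_le_add (norm_coe_le_norm _ _) (norm_coe_le_norm _ _))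

lemma dist_iterativeEquationOperator_le {L : ℝ≥0} {φ : E →ᵇ E} (hφ : LipschitzWith L φ)
    (ψ : E →ᵇ E) :
    dist (iterativeEquationOperator hhinv finv g φ) (iterativeEquationOperator hhinv finv g ψ) ≤
      κ * (L + 1) * dist φ ψ := by
  refine (dist_le (by positivity)).2 fun y => ?_
  simp only [iterativeEquationOperator_apply]
  calc dist (hinv (φ (φ (finv y)) - g (finv y))) (hinv (ψ (ψ (finv y)) - g (finv y)))
      ≤ κ * dist (φ (φ (finv y))) (ψ (ψ (finv y))) := by
        simpa only [dist_sub_right] using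
          hhinv.dist_le_mul (φ (φ (finv y)) - g (finv y)) (ψ (ψ (finv y)) - g (finv y))
    _ ≤ κ * ((L + 1) * dist φ ψ) := by gcongr; exact dist_apply_apply_le hφ ψ _
    _ = κ * (L + 1) * dist φ ψ := by ring

theorem exists_fixedPoint_iterativeEquationOperator [CompleteSpace E] {L a β : ℝ≥0}
    (hfinv : LipschitzWith a finv) (hg : LipschitzWith β g) (hL : κ * ((L * L + β) * a) ≤ L)
    (hκ : κ * (L + 1) < 1) :
    ∃ φ : E →ᵇ E, LipschitzWith L φ ∧ iterativeEquationOperator hhinv finv g φ = φ := by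
  set T := iterativeEquationOperator hhinv finv g
  have hκ1 : (κ : ℝ) < 1 := by
    have : κ ≤ κ * (L + 1) := le_mul_of_one_le_right zero_le le_add_self
    exact_mod_cast this.trans_lt hκ
  set R := (‖hinv 0‖ + κ * ‖g‖) / (1 - κ)
  have hR : ‖hinv 0‖ + κ * (R + ‖g‖) = R := by
    simp only [R]
    field_simp [(sub_pos.2 hκ1).ne']
    ring
  set S := {φ : E →ᵇ E | LipschitzWith L φ ∧ ‖φ‖ ≤ R}
  have hS : IsClosed S :=
    ((isClosed_setOfPred_lipschitzWith L).preimage continuous_coeFun).inter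
      (isClosed_le continuous_norm continuous_const)
  have hmaps : MapsTo T S S := fun φ hφ =>
    ⟨(lipschitzWith_iterativeEquationOperator hhinv hφ.1 hfinv hg).weaken hL,
      (norm_iterativeEquationOperator_le hhinv φ).trans (hR ▸ by gcongr; exact hφ.2)⟩
  have hcontr : ContractingWith (κ * (L + 1)) (hmaps.restrict T S S) :=
    ⟨hκ, (LipschitzOnWith.of_dist_le_mul fun φ hφ ψ _ =>
      dist_iterativeEquationOperator_le hhinv hφ.1 ψ).mapsToRestrict hmaps⟩
  have h0 : (0 : E →ᵇ E) ∈ S :=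
    ⟨LipschitzWith.const' 0, norm_zero.trans_le (div_nonneg (by positivity) (sub_pos.2 hκ1).le)⟩
  obtain ⟨φ, hφS, hfix, -⟩ := hcontr.exists_fixedPoint' hS.isComplete hmaps h0 (edist_ne_top _ _)
  exact ⟨φ, hφS.1, hfix⟩

end IterativeEquation

theorem stmt_4 (h f g : ℝ → ℝ) (hh : Continuous h) (hf : Continuous f) (hg : Continuous g)
    (K : ℝ) (hK : 1 < K) (hexp : ∀ x y : ℝ, K * |x - y| ≤ |h x - h y|)
    (α : ℝ) (hα : 0 < α) (hfexp : ∀ x y : ℝ, α * |x - y| ≤ |f x - f y|)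
    (β : ℝ) (hβ : 0 ≤ β)
    (hgb : ∃ M : ℝ, ∀ x : ℝ, |g x| ≤ M)
    (hglip : ∀ x y : ℝ, |g x - g y| ≤ β * |x - y|)
    (hcond1 : α < 2 * (1 - 1 / K) → β ≤ (1 / 4) * α ^ 2 * K ^ 2)
    (hcond2 : 2 * (1 - 1 / K) ≤ α → β < (K - 1) * (α * K - K + 1)) :
    ∃ φ : ℝ → ℝ, Continuous φ ∧ (∃ M : ℝ, ∀ x : ℝ, |φ x| ≤ M) ∧
      ∀ x : ℝ, φ (φ x) = h (φ (f x)) + g x := by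
  obtain ⟨M, hM⟩ := hgb
  have hK0 : 0 < K := one_pos.trans hK
  obtain ⟨hinv, -, hh_inv, hhinv⟩ := exists_lipschitzWith_inverse_of_expanding hK0 hh hexp
  obtain ⟨finv, hf_inv, -, hfinv⟩ := exists_lipschitzWith_inverse_of_expanding hα hf hfexp
  obtain ⟨L, hLK, hLq⟩ := exists_add_one_lt_and_sq_add_le hK hα hcond1 hcond2
  have hL : K⁻¹.toNNReal * ((L * L + β.toNNReal) * α⁻¹.toNNReal) ≤ L := by
    rw [← NNReal.coe_le_coe]
    push_cast [Real.coe_toNNReal _ hβ, Real.coe_toNNReal _ (inv_nonneg.2 hK0.le),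
      Real.coe_toNNReal _ (inv_nonneg.2 hα.le)]
    rw [inv_mul_le_iff₀ hK0, mul_inv_le_iff₀ hα]
    linarith [sq (L : ℝ)]
  have hκ : K⁻¹.toNNReal * (L + 1) < 1 := by
    rw [← NNReal.coe_lt_coe]
    push_cast [Real.coe_toNNReal _ (inv_nonneg.2 hK0.le)]
    rwa [inv_mul_lt_iff₀ hK0, mul_one]
  obtain ⟨φ, -, hφ⟩ := exists_fixedPoint_iterativeEquationOperator hhinv
    (finv := ⟨finv, hfinv.continuous⟩) (g := .ofNormedAddCommGroup g hg M hM) hfinv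
    (LipschitzWith.of_dist_le' hglip) hL hκ
  refine ⟨φ, φ.continuous, ⟨‖φ‖, φ.norm_coe_le_norm⟩, fun x => ?_⟩
  have := congrArg h (DFunLike.congr_fun hφ (f x))
  simp only [iterativeEquationOperator_apply, ContinuousMap.coe_mk, hf_inv x, hh_inv _] at this
  exact sub_eq_iff_eq_add.1 this
end

section
/- Let h : ℝ → ℝ be bijective with |h(x) - h(y)| ≥ K|x - y| for all x, y (K > 1), f : ℝ → ℝ bijective, and g : ℝ → ℝ. For φ : ℝ → ℝ define T(φ)(x) = h⁻¹(φ(φ(f⁻¹(x))) - g(f⁻¹(x))). If φ₁, φ₂ : ℝ → ℝ are bounded functions with φ₁ Lipschitz of constant L, then sup over x of |T(φ₁)(x) - T(φ₂)(x)| ≤ (L+1)/K · sup over x of |φ₁(x) - φ₂(x)|. -/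
theorem stmt_6 (h f g : ℝ → ℝ) (K : ℝ) (hK : 1 < K)
    (hhbij : Function.Bijective h) (hfbij : Function.Bijective f)
    (hhexp : ∀ x y : ℝ, K * |x - y| ≤ |h x - h y|)
    (φ₁ φ₂ : ℝ → ℝ) (L : ℝ) (hL : 0 ≤ L)
    (hφ₁b : ∃ M : ℝ, ∀ x : ℝ, |φ₁ x| ≤ M) (hφ₂b : ∃ M : ℝ, ∀ x : ℝ, |φ₂ x| ≤ M)
    (hφ₁lip : ∀ x y : ℝ, |φ₁ x - φ₁ y| ≤ L * |x - y|)
    (S : ℝ) (hS : ∀ x : ℝ, |φ₁ x - φ₂ x| ≤ S) :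
    ∀ x : ℝ,
      |Function.invFun h (φ₁ (φ₁ (Function.invFun f x)) - g (Function.invFun f x)) -
        Function.invFun h (φ₂ (φ₂ (Function.invFun f x)) - g (Function.invFun f x))|
      ≤ ((L + 1) / K) * S := by
  intro x
  have hK0 : 0 < K := lt_trans one_pos hK
  set y := Function.invFun f x with hy
  have hinv : ∀ a : ℝ, h (Function.invFun h a) = a := fun a =>
    Function.rightInverse_invFun hhbij.2 a
  -- contraction of h⁻¹
  have hcontr : ∀ a b : ℝ, |Function.invFun h a - Function.invFun h b| ≤ |a - b| / K := by
    intro a b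
    have := hhexp (Function.invFun h a) (Function.invFun h b)
    rw [hinv, hinv] at this
    rw [div_eq_inv_mul, ← inv_mul_le_iff₀ (by positivity : (0:ℝ) < K⁻¹), inv_inv]
    exact this
  have key : |φ₁ (φ₁ y) - φ₂ (φ₂ y)| ≤ (L + 1) * S := by
    have h1 : |φ₁ (φ₁ y) - φ₁ (φ₂ y)| ≤ L * S :=
      le_trans (hφ₁lip (φ₁ y) (φ₂ y)) (mul_le_mul_of_nonneg_left (hS y) hL)
    have h2 : |φ₁ (φ₂ y) - φ₂ (φ₂ y)| ≤ S := hS (φ₂ y)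
    calc |φ₁ (φ₁ y) - φ₂ (φ₂ y)| ≤ |φ₁ (φ₁ y) - φ₁ (φ₂ y)| + |φ₁ (φ₂ y) - φ₂ (φ₂ y)| :=
          abs_sub_le _ _ _
      _ ≤ L * S + S := add_le_add h1 h2
      _ = (L + 1) * S := by ring
  calc |Function.invFun h (φ₁ (φ₁ y) - g y) - Function.invFun h (φ₂ (φ₂ y) - g y)|
      ≤ |(φ₁ (φ₁ y) - g y) - (φ₂ (φ₂ y) - g y)| / K := hcontr _ _
    _ = |φ₁ (φ₁ y) - φ₂ (φ₂ y)| / K := by ring_nf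
    _ ≤ ((L + 1) * S) / K := by
        gcongr
    _ = ((L + 1) / K) * S := by ring
end

section
/- Let I = [a,b] be a compact interval, ω > 0, σ_ω the piecewise-linear cutoff function (equal to 1 on [a,b], 0 outside (a-ω, b+ω), linear in between), and let g : ℝ → ℝ be Lipschitz with constant β. Then the truncated function g̃(x) := g(σ_ω(x)·x) is Lipschitz on ℝ with Lipschitz constant at most β(1 + max{|a|, |b|}/ω). -/
/-!
Write `h x = σ_ω x * x`. On the five intervals cut out by `a - ω ≤ a ≤ b ≤ b + ω` the map `h` is
`0`, the quadratic `(x - a + ω) x / ω`, the identity, the quadratic `(b + ω - x) x / ω` and `0`.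
Each piece is `(1 + max |a| |b| / ω)`-Lipschitz: for the quadratics,
`q x - q y = (x - y) (x + y - a + ω) / ω` with `|x + y - a + ω| ≤ |a| + ω` on `[a - ω, a]`, and
symmetrically on the right. Since the pieces meet at common endpoints, the triangle inequality
through the endpoint glues them into a global Lipschitz bound, and composing with `g` multiplies
the constant by `β`.
-/

open Set NNReal

theorem LipschitzOnWith.congr {α β : Type*} [PseudoEMetricSpace α] [PseudoEMetricSpace β]
    {K : ℝ≥0} {f f' : α → β} {s : Set α} (hf : LipschitzOnWith K f s) (h : EqOn f f' s) :
    LipschitzOnWith K f' s := fun x hx y hy => by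
  rw [← h hx, ← h hy]
  exact hf hx hy

theorem LipschitzOnWith.union_of_subset_Iic_of_subset_Ici {E : Type*} [PseudoMetricSpace E]
    {K : ℝ≥0} {f : ℝ → E} {s t : Set ℝ} {c : ℝ} (hs : LipschitzOnWith K f s)
    (ht : LipschitzOnWith K f t) (hcs : c ∈ s) (hct : c ∈ t) (hsc : s ⊆ Iic c)
    (htc : t ⊆ Ici c) : LipschitzOnWith K f (s ∪ t) := by
  have across : ∀ x ∈ s, ∀ y ∈ t, dist (f x) (f y) ≤ K * dist x y := fun x hx y hy => by
    have hxc : x ≤ c := hsc hx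
    have hcy : c ≤ y := htc hy
    calc dist (f x) (f y) ≤ dist (f x) (f c) + dist (f c) (f y) := dist_triangle _ _ _
      _ ≤ K * dist x c + K * dist c y :=
        add_le_add (hs.dist_le_mul x hx c hcs) (ht.dist_le_mul c hct y hy)
      _ = K * dist x y := by
        rw [Real.dist_eq, Real.dist_eq, Real.dist_eq, abs_of_nonpos (by linarith),
          abs_of_nonpos (by linarith), abs_of_nonpos (by linarith)]
        ring
  refine lipschitzOnWith_iff_dist_le_mul.2 ?_
  rintro x (hx | hx) y (hy | hy)
  · exact hs.dist_le_mul x hx y hy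
  · exact across x hx y hy
  · rw [dist_comm, dist_comm x]
    exact across y hy x hx
  · exact ht.dist_le_mul x hx y hy

theorem LipschitzOnWith.Ici_of_Icc_Ici {E : Type*} [PseudoMetricSpace E] {K : ℝ≥0}
    {f : ℝ → E} {c d : ℝ} (hcd : c ≤ d) (h₁ : LipschitzOnWith K f (Icc c d))
    (h₂ : LipschitzOnWith K f (Ici d)) : LipschitzOnWith K f (Ici c) := by
  rw [← Icc_union_Ici_eq_Ici hcd]
  exact h₁.union_of_subset_Iic_of_subset_Ici h₂ (right_mem_Icc.2 hcd) self_mem_Ici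
    (fun _ hx => hx.2) subset_rfl

theorem LipschitzWith.of_Iic_Ici {E : Type*} [PseudoMetricSpace E] {K : ℝ≥0} {f : ℝ → E}
    {c : ℝ} (h₁ : LipschitzOnWith K f (Iic c)) (h₂ : LipschitzOnWith K f (Ici c)) :
    LipschitzWith K f := by
  rw [← lipschitzOnWith_univ, ← Iic_union_Ici (a := c)]
  exact h₁.union_of_subset_Iic_of_subset_Ici h₂ self_mem_Iic self_mem_Ici subset_rfl subset_rfl

noncomputable def cutoff (a b ω x : ℝ) : ℝ :=
  if x ∈ Icc a b then 1
  else if x ∈ Ioo (a - ω) a then x / ω + 1 - a / ω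
  else if x ∈ Ioo b (b + ω) then -x / ω + 1 + b / ω
  else 0

section cutoff

variable {a b ω : ℝ}

theorem eqOn_cutoff_mul_self_Iic (hab : a ≤ b) (hω : 0 < ω) :
    EqOn (fun _ => 0) (fun x => cutoff a b ω x * x) (Iic (a - ω)) := fun x (hx : x ≤ a - ω) => by
  have h₁ : x ∉ Icc a b := fun h => by linarith [h.1]
  have h₂ : x ∉ Ioo (a - ω) a := fun h => by linarith [h.1]
  have h₃ : x ∉ Ioo b (b + ω) := fun h => by linarith [h.1]
  simp [cutoff, h₁, h₂, h₃]

theorem eqOn_cutoff_mul_self_Icc_left (hab : a ≤ b) (hω : 0 < ω) :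
    EqOn (fun x => (x - (a - ω)) * x / ω) (fun x => cutoff a b ω x * x) (Icc (a - ω) a) := by
  rintro x ⟨hx₁, hx₂⟩
  rcases hx₂.lt_or_eq with hxa | rfl
  · have h₁ : x ∉ Icc a b := fun h => by linarith [h.1]
    rcases hx₁.lt_or_eq with hx₁ | rfl
    · simp only [cutoff, if_neg h₁, if_pos (show x ∈ Ioo (a - ω) a from ⟨hx₁, hxa⟩)]
      field_simp
      ring
    · have h₃ : a - ω ∉ Ioo b (b + ω) := fun h => by linarith [h.1]
      simp [cutoff, h₁, h₃]
  · simp only [cutoff, if_pos (show x ∈ Icc x b from ⟨le_rfl, hab⟩)]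
    field_simp
    ring

theorem eqOn_cutoff_mul_self_Icc :
    EqOn id (fun x => cutoff a b ω x * x) (Icc a b) := fun x hx => by
  simp [cutoff, hx]

theorem eqOn_cutoff_mul_self_Icc_right (hab : a ≤ b) (hω : 0 < ω) :
    EqOn (fun x => (b + ω - x) * x / ω) (fun x => cutoff a b ω x * x) (Icc b (b + ω)) := by
  rintro x ⟨hx₁, hx₂⟩
  rcases hx₁.lt_or_eq with hbx | rfl
  · have h₁ : x ∉ Icc a b := fun h => by linarith [h.2]
    have h₂ : x ∉ Ioo (a - ω) a := fun h => by linarith [h.2]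
    rcases hx₂.lt_or_eq with hx₂ | rfl
    · simp only [cutoff, if_neg h₁, if_neg h₂, if_pos (show x ∈ Ioo b (b + ω) from ⟨hbx, hx₂⟩)]
      field_simp
      ring
    · simp [cutoff, h₁, h₂]
  · simp only [cutoff, if_pos (show b ∈ Icc a b from ⟨hab, le_rfl⟩)]
    field_simp
    ring

theorem eqOn_cutoff_mul_self_Ici (hab : a ≤ b) (hω : 0 < ω) :
    EqOn (fun _ => 0) (fun x => cutoff a b ω x * x) (Ici (b + ω)) := fun x (hx : b + ω ≤ x) => by
  have h₁ : x ∉ Icc a b := fun h => by linarith [h.2]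
  have h₂ : x ∉ Ioo (a - ω) a := fun h => by linarith [h.2]
  have h₃ : x ∉ Ioo b (b + ω) := fun h => by linarith [h.2]
  simp [cutoff, h₁, h₂, h₃]

theorem lipschitzOnWith_ramp_left (hω : 0 < ω) :
    LipschitzOnWith (1 + |a| / ω).toNNReal (fun x => (x - (a - ω)) * x / ω) (Icc (a - ω) a) := by
  refine LipschitzOnWith.of_dist_le' fun x ⟨hx₁, hx₂⟩ y ⟨hy₁, hy₂⟩ => ?_
  have hfactor : (x - (a - ω)) * x / ω - (y - (a - ω)) * y / ω
      = (x + y - (a - ω)) / ω * (x - y) := by ring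
  have hbound : |x + y - (a - ω)| ≤ |a| + ω :=
    abs_le.2 ⟨by linarith [neg_abs_le a], by linarith [le_abs_self a]⟩
  have hconst : (|a| + ω) / ω = 1 + |a| / ω := by field_simp; ring
  rw [Real.dist_eq, Real.dist_eq, hfactor, abs_mul, abs_div, abs_of_pos hω, ← hconst]
  gcongr

theorem lipschitzOnWith_ramp_right (hω : 0 < ω) :
    LipschitzOnWith (1 + |b| / ω).toNNReal (fun x => (b + ω - x) * x / ω) (Icc b (b + ω)) := by
  refine LipschitzOnWith.of_dist_le' fun x ⟨hx₁, hx₂⟩ y ⟨hy₁, hy₂⟩ => ?_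
  have hfactor : (b + ω - x) * x / ω - (b + ω - y) * y / ω = (b + ω - x - y) / ω * (x - y) := by
    ring
  have hbound : |b + ω - x - y| ≤ |b| + ω :=
    abs_le.2 ⟨by linarith [le_abs_self b], by linarith [neg_abs_le b]⟩
  have hconst : (|b| + ω) / ω = 1 + |b| / ω := by field_simp; ring
  rw [Real.dist_eq, Real.dist_eq, hfactor, abs_mul, abs_div, abs_of_pos hω, ← hconst]
  gcongr

theorem lipschitzWith_cutoff_mul_self (hab : a ≤ b) (hω : 0 < ω) :
    LipschitzWith (1 + max |a| |b| / ω).toNNReal (fun x => cutoff a b ω x * x) := by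
  set K := (1 + max |a| |b| / ω).toNNReal
  have hK : 1 ≤ K := by
    rw [Real.one_le_toNNReal]
    have : 0 ≤ max |a| |b| / ω := by positivity
    linarith
  have hleft : (1 + |a| / ω).toNNReal ≤ K :=
    Real.toNNReal_le_toNNReal (by gcongr; exact le_max_left _ _)
  have hright : (1 + |b| / ω).toNNReal ≤ K :=
    Real.toNNReal_le_toNNReal (by gcongr; exact le_max_right _ _)
  have hzero : LipschitzWith K (fun _ : ℝ => (0 : ℝ)) := (LipschitzWith.const 0).weaken bot_le
  have h₁ := (hzero.lipschitzOnWith (s := Iic (a - ω))).congr (eqOn_cutoff_mul_self_Iic hab hω)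
  have h₂ := ((lipschitzOnWith_ramp_left hω).weaken hleft).congr
    (eqOn_cutoff_mul_self_Icc_left hab hω)
  have h₃ := ((LipschitzWith.id.lipschitzOnWith (s := Icc a b)).weaken hK).congr
    (eqOn_cutoff_mul_self_Icc (ω := ω))
  have h₄ := ((lipschitzOnWith_ramp_right hω).weaken hright).congr
    (eqOn_cutoff_mul_self_Icc_right hab hω)
  have h₅ := (hzero.lipschitzOnWith (s := Ici (b + ω))).congr (eqOn_cutoff_mul_self_Ici hab hω)
  exact .of_Iic_Ici h₁ <| h₂.Ici_of_Icc_Ici (by linarith) <| h₃.Ici_of_Icc_Ici hab <|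
    h₄.Ici_of_Icc_Ici (by linarith) h₅

end cutoff

theorem stmt_8 (a b ω β : ℝ) (hab : a < b) (hω : 0 < ω) (hβ : 0 ≤ β)
    (g : ℝ → ℝ) (hg : ∀ x y : ℝ, |g x - g y| ≤ β * |x - y|) :
    let σ : ℝ → ℝ := fun x =>
      if x ∈ Set.Icc a b then 1
      else if x ∈ Set.Ioo (a - ω) a then x / ω + 1 - a / ω
      else if x ∈ Set.Ioo b (b + ω) then -x / ω + 1 + b / ω
      else 0
    ∀ x y : ℝ, |g (σ x * x) - g (σ y * y)| ≤ β * (1 + max |a| |b| / ω) * |x - y| := by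
  intro σ x y
  have hg' : LipschitzWith β.toNNReal g :=
    LipschitzWith.of_dist_le' fun x y => by simpa only [Real.dist_eq] using hg x y
  have h := (hg'.comp (lipschitzWith_cutoff_mul_self hab.le hω)).dist_le_mul x y
  have hM : 0 ≤ 1 + max |a| |b| / ω := by positivity
  rwa [NNReal.coe_mul, Real.coe_toNNReal _ hβ, Real.coe_toNNReal _ hM, Real.dist_eq,
    Real.dist_eq] at h
end

section
/- Let h : ℝ → ℝ be a bijection satisfying |h(x) - h(y)| ≥ K|x - y| for all x, y with K > 1, and suppose there is κ_h ∈ ℝ with sup over x of |h(x) - κ_h x| < ∞. Then sup over x of |h⁻¹(x) - x/κ_h| < ∞ (in particular κ_h ≠ 0 and the inverse is linearly bounded with slope 1/κ_h). -/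
theorem stmt_14 (h : ℝ → ℝ) (K : ℝ) (hK : 1 < K) (hbij : Function.Bijective h)
    (hexp : ∀ x y : ℝ, K * |x - y| ≤ |h x - h y|)
    (κ : ℝ) (hκ : ∃ C : ℝ, ∀ x : ℝ, |h x - κ * x| ≤ C) :
    κ ≠ 0 ∧ ∃ C : ℝ, ∀ x : ℝ, |Function.invFun h x - x / κ| ≤ C := by
  obtain ⟨C, hC⟩ := hκ
  have hK0 : (0:ℝ) < K := lt_trans one_pos hK
  have hκ0 : κ ≠ 0 := by
    intro hz
    subst hz
    have h1 : ∀ x, |h x| ≤ C := by intro x; simpa using hC x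
    have h2 := hexp ((2*C+1)/K) 0
    have h3 : |h ((2*C+1)/K) - h 0| ≤ 2*C := by
      calc |h ((2*C+1)/K) - h 0| ≤ |h ((2*C+1)/K)| + |h 0| := abs_sub _ _
        _ ≤ C + C := add_le_add (h1 _) (h1 _)
        _ = 2*C := by ring
    have hCpos : 0 ≤ C := le_trans (abs_nonneg _) (h1 0)
    have h4 : K * |(2*C+1)/K - 0| = 2*C+1 := by
      rw [sub_zero, abs_of_nonneg (by positivity)]
      field_simp
    linarith [le_trans h2 h3, h4 ▸ le_trans h2 h3]
  refine ⟨hκ0, C / |κ|, fun x => ?_⟩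
  have hx : h (Function.invFun h x) = x := Function.rightInverse_invFun hbij.surjective x
  have := hC (Function.invFun h x)
  rw [hx] at this
  have hκa : (0:ℝ) < |κ| := abs_pos.mpr hκ0
  rw [le_div_iff₀ hκa, ← abs_mul]
  have heq : (Function.invFun h x - x / κ) * κ = -(x - κ * Function.invFun h x) := by
    field_simp; ring
  rw [heq, abs_neg]
  exact this
end

section
/- Suppose h, f, g : ℝ → ℝ are continuous; h satisfies |h(x)-h(y)| ≥ K|x-y| (K>1) and sup|h(x) - κ_h x| < ∞; f satisfies |f(x)-f(y)| ≥ α|x-y| (α>0) and sup|f(x) - κ_f x| < ∞; g is Lipschitz with constant ≤ β, κ_g ≠ 0, and sup|g(x) - κ_g x| < ∞. If β ≤ (1/4)α²K² when α < 2(1-1/K), or β < (K-1)(αK-K+1) when α ≥ 2(1-1/K), then the equation φ(φ(x)) = h(φ(f(x))) + g(x) has a continuous solution φ : ℝ → ℝ; moreover, this solution is unbounded. -/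
/-!
Look for `φ = ℓ • id + u` with `u` bounded. Comparing linear parts forces
`ℓ ^ 2 = κh κf ℓ + κg`, and the conditions on `α`, `β`, `K` provide `L < K - 1` with
`L ^ 2 + β ≤ K α L`, for which this quadratic has a root with `|ℓ| ≤ L`. Being expanding and at
bounded distance from linear maps, `h` and `f` are invertible, and the equation becomes the
fixed-point problem `φ = h⁻¹ ∘ (φ ∘ φ - g) ∘ f⁻¹`. On the complete space of such `φ` that are
`L`-Lipschitz, with the sup distance, this operator is a contraction with constant `(L + 1) / K`.
The fixed point is unbounded since `ℓ ≠ 0`, as `κg ≠ 0`.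
-/

open Function Filter Topology Set

def NearLinear (F : ℝ → ℝ) (κ : ℝ) : Prop := ∃ C, ∀ x, |F x - κ * x| ≤ C

lemma le_of_forall_nonneg_mul_le_mul_add {c d e : ℝ} (h : ∀ t, 0 ≤ t → c * t ≤ d * t + e) :
    c ≤ d := by
  by_contra! hdc
  have he : 0 ≤ e := by simpa using h 0 le_rfl
  have key := h ((e + 1) / (c - d)) (by positivity)
  have : (c - d) * ((e + 1) / (c - d)) = e + 1 := mul_div_cancel₀ _ (by linarith)
  nlinarith

namespace NearLinear

variable {F G : ℝ → ℝ} {κ μ : ℝ}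

lemma comp (hF : NearLinear F κ) (hG : NearLinear G μ) : NearLinear (F ∘ G) (κ * μ) := by
  obtain ⟨C, hC⟩ := hF
  obtain ⟨D, hD⟩ := hG
  refine ⟨C + |κ| * D, fun x => ?_⟩
  calc |F (G x) - κ * μ * x| = |(F (G x) - κ * G x) + κ * (G x - μ * x)| := by ring_nf
    _ ≤ |F (G x) - κ * G x| + |κ| * |G x - μ * x| := by rw [← abs_mul]; exact abs_add_le _ _
    _ ≤ C + |κ| * D := by gcongr; exacts [hC _, hD x]

lemma sub (hF : NearLinear F κ) (hG : NearLinear G μ) : NearLinear (F - G) (κ - μ) := by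
  obtain ⟨C, hC⟩ := hF
  obtain ⟨D, hD⟩ := hG
  refine ⟨C + D, fun x => ?_⟩
  calc |(F - G) x - (κ - μ) * x| = |(F x - κ * x) - (G x - μ * x)| := by
        simp only [Pi.sub_apply]; ring_nf
    _ ≤ C + D := (abs_sub _ _).trans (add_le_add (hC x) (hD x))

lemma of_rightInverse (hF : NearLinear F κ) (hκ : κ ≠ 0) (hGF : RightInverse G F) :
    NearLinear G κ⁻¹ := by
  obtain ⟨C, hC⟩ := hF
  refine ⟨|κ|⁻¹ * C, fun y => ?_⟩
  have : G y - κ⁻¹ * y = κ⁻¹ * -(F (G y) - κ * G y) := by rw [hGF y]; field_simp; ring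
  rw [this, abs_mul, abs_inv, abs_neg]
  exact mul_le_mul_of_nonneg_left (hC _) (by positivity)

lemma exists_abs_sub_le (hF : NearLinear F κ) :
    ∃ C, ∀ x, |F x - F 0| ≤ |κ| * |x| + C ∧ |κ| * |x| ≤ |F x - F 0| + C := by
  obtain ⟨C, hC⟩ := hF
  refine ⟨2 * C, fun x => ?_⟩
  have h0 : |F 0| ≤ C := by simpa using hC 0
  have hx : |(F x - F 0) - κ * x| ≤ 2 * C :=
    calc |(F x - F 0) - κ * x| ≤ |F x - κ * x| + |F 0| := by
          rw [show F x - F 0 - κ * x = (F x - κ * x) - F 0 by ring]; exact abs_sub _ _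
      _ ≤ 2 * C := by linarith [hC x]
  rw [← abs_mul]
  constructor <;> linarith [abs_sub_abs_le_abs_sub (F x - F 0) (κ * x),
    abs_sub_abs_le_abs_sub (κ * x) (F x - F 0), abs_sub_comm (F x - F 0) (κ * x)]

lemma le_abs_of_expanding {c : ℝ} (hF : NearLinear F κ)
    (hexp : ∀ x y, c * |x - y| ≤ |F x - F y|) : c ≤ |κ| := by
  obtain ⟨C, hC⟩ := hF.exists_abs_sub_le
  refine le_of_forall_nonneg_mul_le_mul_add (e := C) fun t ht => ?_
  have hexp_t := hexp t 0
  have hC_t := (hC t).1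
  simp only [sub_zero, abs_of_nonneg ht] at hexp_t hC_t
  linarith

lemma abs_le_of_lipschitz {β : ℝ} (hF : NearLinear F κ)
    (hlip : ∀ x y, |F x - F y| ≤ β * |x - y|) : |κ| ≤ β := by
  obtain ⟨C, hC⟩ := hF.exists_abs_sub_le
  refine le_of_forall_nonneg_mul_le_mul_add (e := C) fun t ht => ?_
  have hlip_t := hlip t 0
  have hC_t := (hC t).2
  simp only [sub_zero, abs_of_nonneg ht] at hlip_t hC_t
  linarith

lemma slope_unique (hF : NearLinear F κ) (hF' : NearLinear F μ) : κ = μ := by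
  have := (hF.sub hF').abs_le_of_lipschitz (β := 0) (fun x y => by simp)
  exact sub_eq_zero.mp (abs_nonpos_iff.mp this)

lemma not_bounded (hF : NearLinear F κ) (hκ : κ ≠ 0) : ¬ ∃ M, ∀ x, |F x| ≤ M := by
  rintro ⟨M, hM⟩
  exact hκ (hF.slope_unique ⟨M, fun x => by simpa using hM x⟩)

lemma surjective (hF : NearLinear F κ) (hcont : Continuous F) (hκ : κ ≠ 0) : Surjective F := by
  obtain ⟨C, hC⟩ := hF
  intro y
  have hlo := (abs_le.mp (hC ((y - C) / κ))).2
  have hhi := (abs_le.mp (hC ((y + C) / κ))).1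
  rw [mul_div_cancel₀ _ hκ] at hlo hhi
  exact intermediate_value_univ ((y - C) / κ) ((y + C) / κ) hcont ⟨by linarith, by linarith⟩

end NearLinear

lemma continuous_of_abs_sub_le_mul {G : ℝ → ℝ} {L : ℝ} (h : ∀ x y, |G x - G y| ≤ L * |x - y|) :
    Continuous G :=
  (LipschitzWith.of_dist_le' (K := L) (by simpa only [Real.dist_eq] using h)).continuous

lemma exists_inverse_of_expanding {F : ℝ → ℝ} {c κ : ℝ} (hc : 0 < c) (hcont : Continuous F)
    (hexp : ∀ x y, c * |x - y| ≤ |F x - F y|) (hF : NearLinear F κ) :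
    ∃ G : ℝ → ℝ, LeftInverse G F ∧ RightInverse G F ∧
      (∀ x y, |G x - G y| ≤ c⁻¹ * |x - y|) ∧ NearLinear G κ⁻¹ := by
  have hκ : κ ≠ 0 := abs_pos.mp (hc.trans_le (hF.le_abs_of_expanding hexp))
  have hinj : Injective F := fun x y hxy => by
    have := hexp x y
    rw [hxy, sub_self, abs_zero] at this
    exact sub_eq_zero.mp (abs_nonpos_iff.mp (nonpos_of_mul_nonpos_right this hc))
  obtain ⟨G, hGF, hFG⟩ := bijective_iff_has_inverse.mp ⟨hinj, hF.surjective hcont hκ⟩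
  refine ⟨G, hGF, hFG, fun x y => ?_, hF.of_rightInverse hκ hFG⟩
  have := hexp (G x) (G y)
  rw [hFG x, hFG y] at this
  rwa [inv_mul_eq_div, le_div_iff₀' hc]

lemma exists_sq_add_le_mul {K α β : ℝ} (hK : 1 < K) (hα : 0 < α)
    (h1 : α < 2 * (1 - 1 / K) → β ≤ (1 / 4) * α ^ 2 * K ^ 2)
    (h2 : 2 * (1 - 1 / K) ≤ α → β < (K - 1) * (α * K - K + 1)) :
    ∃ L, 0 ≤ L ∧ L < K - 1 ∧ L ^ 2 + β ≤ K * α * L := by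
  rcases lt_or_ge α (2 * (1 - 1 / K)) with hlt | hge
  · refine ⟨K * α / 2, by positivity, ?_, by nlinarith [h1 hlt]⟩
    have := mul_lt_mul_of_pos_left hlt (by linarith : 0 < K)
    rw [show K * (2 * (1 - 1 / K)) = 2 * (K - 1) by field_simp] at this
    linarith
  · -- `t ↦ K α t - t ^ 2 - β` is positive at `K - 1`, hence just to the left of it
    have hpos : 0 < K * α * (K - 1) - (K - 1) ^ 2 - β := by nlinarith [h2 hge]
    have hev : ∀ᶠ t in 𝓝 (K - 1), 0 < t ∧ 0 < K * α * t - t ^ 2 - β :=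
      (lt_mem_nhds (by linarith)).and
        ((by fun_prop : Continuous fun t : ℝ => K * α * t - t ^ 2 - β).continuousAt.eventually
          (lt_mem_nhds hpos))
    obtain ⟨L, ⟨hL0, hLq⟩, hLK⟩ :=
      ((hev.filter_mono nhdsWithin_le_nhds).and (self_mem_nhdsWithin (s := Iio (K - 1)))).exists
    exact ⟨L, hL0.le, hLK, by linarith⟩

lemma exists_root_abs_le {a κ L : ℝ} (hL : 0 ≤ L) (h : |L ^ 2 - κ| ≤ |a| * L) :
    ∃ t, |t| ≤ L ∧ t ^ 2 = a * t + κ := by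
  obtain ⟨hlo, hhi⟩ := abs_le.mp h
  have hsign : (0 : ℝ) ∈ uIcc ((-L) ^ 2 - a * -L - κ) (L ^ 2 - a * L - κ) := by
    rcases le_total 0 a with ha | ha
    · rw [abs_of_nonneg ha] at hlo hhi
      exact mem_uIcc.mpr (Or.inr ⟨by linarith, by linarith⟩)
    · rw [abs_of_nonpos ha] at hlo hhi
      exact mem_uIcc.mpr (Or.inl ⟨by linarith, by linarith⟩)
  obtain ⟨t, ht, hroot⟩ := intermediate_value_uIcc
    (by fun_prop : Continuous fun t : ℝ => t ^ 2 - a * t - κ).continuousOn hsign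
  rw [uIcc_of_le (by linarith)] at ht
  exact ⟨t, abs_le.mpr ht, by linarith⟩

/-- With `H = h⁻¹` and `Fi = f⁻¹`, the solutions of `φ ∘ φ = h ∘ φ ∘ f + g` are the fixed points
of this operator. -/
def equationOperator (H Fi g φ : ℝ → ℝ) : ℝ → ℝ := H ∘ (φ ∘ φ - g) ∘ Fi

section equationOperator

variable {h f H Fi g φ ψ : ℝ → ℝ} {K α β L : ℝ}

lemma solution_of_equationOperator_eq (hH : RightInverse H h) (hFi : LeftInverse Fi f)
    (hφ : equationOperator H Fi g φ = φ) (x : ℝ) : φ (φ x) = h (φ (f x)) + g x := by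
  have := congrArg h (congrFun hφ (f x))
  simp only [equationOperator, comp_apply, Pi.sub_apply, hFi x, hH _] at this
  linarith

lemma continuous_equationOperator (hH : Continuous H) (hFi : Continuous Fi) (hg : Continuous g)
    (hφ : Continuous φ) : Continuous (equationOperator H Fi g φ) :=
  hH.comp (((hφ.comp hφ).sub hg).comp hFi)

lemma NearLinear.equationOperator {κh κf κg ℓ : ℝ} (hH : NearLinear H κh⁻¹)
    (hFi : NearLinear Fi κf⁻¹) (hg : NearLinear g κg) (hφ : NearLinear φ ℓ) (hκh : κh ≠ 0)
    (hκf : κf ≠ 0) (hℓ : ℓ ^ 2 = κh * κf * ℓ + κg) :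
    NearLinear (equationOperator H Fi g φ) ℓ := by
  have key := hH.comp (((hφ.comp hφ).sub hg).comp hFi)
  rwa [show ℓ * ℓ - κg = κh * κf * ℓ by linear_combination hℓ,
    show κh⁻¹ * (κh * κf * ℓ * κf⁻¹) = ℓ by field_simp] at key

lemma lipschitz_equationOperator (hK : 0 < K) (hα : 0 < α) (hL : 0 ≤ L)
    (hLq : L ^ 2 + β ≤ K * α * L) (hH : ∀ x y, |H x - H y| ≤ K⁻¹ * |x - y|)
    (hFi : ∀ x y, |Fi x - Fi y| ≤ α⁻¹ * |x - y|) (hg : ∀ x y, |g x - g y| ≤ β * |x - y|)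
    (hφ : ∀ x y, |φ x - φ y| ≤ L * |x - y|) (x y : ℝ) :
    |equationOperator H Fi g φ x - equationOperator H Fi g φ y| ≤ L * |x - y| := by
  set u := Fi x
  set v := Fi y
  calc |H (φ (φ u) - g u) - H (φ (φ v) - g v)|
      ≤ K⁻¹ * |(φ (φ u) - φ (φ v)) - (g u - g v)| := by
        convert hH _ _ using 3; ring
    _ ≤ K⁻¹ * (L * (L * |u - v|) + β * |u - v|) := by
        gcongr
        refine (abs_sub _ _).trans (add_le_add ((hφ _ _).trans ?_) (hg u v))
        gcongr
        exact hφ u v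
    _ = K⁻¹ * (L ^ 2 + β) * |u - v| := by ring
    _ ≤ K⁻¹ * (K * α * L) * (α⁻¹ * |x - y|) := by gcongr; exact hFi x y
    _ = L * |x - y| := by field_simp

lemma abs_equationOperator_sub_le (hK : 0 < K) (hL : 0 ≤ L)
    (hH : ∀ x y, |H x - H y| ≤ K⁻¹ * |x - y|) (hφ : ∀ x y, |φ x - φ y| ≤ L * |x - y|) {D : ℝ} (hD : ∀ t, |φ t - ψ t| ≤ D) (x : ℝ) :
    |equationOperator H Fi g φ x - equationOperator H Fi g ψ x| ≤ K⁻¹ * (L + 1) * D := by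
  set w := Fi x
  calc |H (φ (φ w) - g w) - H (ψ (ψ w) - g w)|
      ≤ K⁻¹ * |(φ (φ w) - φ (ψ w)) + (φ (ψ w) - ψ (ψ w))| := by
        convert hH _ _ using 3; ring
    _ ≤ K⁻¹ * (L * D + D) := by
        gcongr
        refine (abs_add_le _ _).trans (add_le_add ((hφ _ _).trans ?_) (hD _))
        gcongr
        exact hD w
    _ = K⁻¹ * (L + 1) * D := by ring

end equationOperator

open BoundedContinuousFunction in
lemma exists_fixedPoint_nearLinear {Ψ : (ℝ → ℝ) → ℝ → ℝ} {ℓ L c : ℝ} (hℓ : |ℓ| ≤ L) (hc : c < 1)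
    (hcont : ∀ φ, Continuous φ → Continuous (Ψ φ))
    (hlin : ∀ φ, NearLinear φ ℓ → NearLinear (Ψ φ) ℓ)
    (hlip : ∀ φ, (∀ x y, |φ x - φ y| ≤ L * |x - y|) → ∀ x y, |Ψ φ x - Ψ φ y| ≤ L * |x - y|)
    (hcontr : ∀ φ ψ D, (∀ x y, |φ x - φ y| ≤ L * |x - y|) → (∀ t, |φ t - ψ t| ≤ D) →
      ∀ x, |Ψ φ x - Ψ ψ x| ≤ c * D) :
    ∃ φ, Continuous φ ∧ NearLinear φ ℓ ∧ Ψ φ = φ := by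
  let Φ : (ℝ →ᵇ ℝ) → ℝ → ℝ := fun u x => ℓ * x + u x
  have hΦcont (u : ℝ →ᵇ ℝ) : Continuous (Φ u) := by fun_prop
  have hΦlin (u : ℝ →ᵇ ℝ) : NearLinear (Φ u) ℓ :=
    ⟨‖u‖, fun x => by simpa [Φ] using u.norm_coe_le_norm x⟩
  have hT (u : ℝ →ᵇ ℝ) : ∃ v : ℝ →ᵇ ℝ, Φ v = Ψ (Φ u) := by
    obtain ⟨C, hC⟩ := hlin _ (hΦlin u)
    refine ⟨ofNormedAddCommGroup (fun x => Ψ (Φ u) x - ℓ * x)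
      ((hcont _ (hΦcont u)).sub (by fun_prop)) C hC, funext fun x => ?_⟩
    simp [Φ]
  choose T hT using hT
  set S := {u : ℝ →ᵇ ℝ | ∀ x y, |Φ u x - Φ u y| ≤ L * |x - y|}
  have hS : IsClosed S := by
    simp only [S, ofPred_forall]
    exact isClosed_iInter fun x => isClosed_iInter fun y =>
      isClosed_le (by fun_prop) continuous_const
  have h0S : 0 ∈ S := fun x y => by
    simpa [Φ, ← mul_sub, abs_mul] using mul_le_mul_of_nonneg_right hℓ (abs_nonneg (x - y))
  have hTS : MapsTo T S S := fun u hu x y => by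
    rw [hT]
    exact hlip _ hu x y
  have hTc : ContractingWith c.toNNReal (hTS.restrict T S S) := by
    refine ⟨by simpa using hc, LipschitzWith.of_dist_le' fun u v => ?_⟩
    refine (dist_le_iff_of_nonempty).mpr fun x => ?_
    have hdiff : T u x - T v x = Ψ (Φ u) x - Ψ (Φ v) x := by
      rw [← hT, ← hT]; simp [Φ]
    rw [Real.dist_eq]
    simp only [MapsTo.val_restrict_apply, hdiff]
    refine hcontr _ _ _ u.2 (fun t => ?_) x
    have := dist_coe_le_dist (f := u.1) (g := v.1) t
    rw [Real.dist_eq] at this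
    simpa [Φ, Subtype.dist_eq] using this
  obtain ⟨u, -, hu, -⟩ := hTc.exists_fixedPoint' hS.isComplete hTS h0S (edist_ne_top _ _)
  exact ⟨Φ u, hΦcont u, hΦlin u, by rw [← hT, hu.eq]⟩

theorem stmt_16_general (h f g : ℝ → ℝ) (hh : Continuous h) (hf : Continuous f) (hg : Continuous g)
    (K : ℝ) (hK : 1 < K) (hexp : ∀ x y : ℝ, K * |x - y| ≤ |h x - h y|)
    (κh : ℝ) (hκh : ∃ C : ℝ, ∀ x : ℝ, |h x - κh * x| ≤ C)
    (α : ℝ) (hα : 0 < α) (hfexp : ∀ x y : ℝ, α * |x - y| ≤ |f x - f y|)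
    (κf : ℝ) (hκf : ∃ C : ℝ, ∀ x : ℝ, |f x - κf * x| ≤ C)
    (β : ℝ) (hglip : ∀ x y : ℝ, |g x - g y| ≤ β * |x - y|)
    (κg : ℝ) (hκg0 : κg ≠ 0) (hκg : ∃ C : ℝ, ∀ x : ℝ, |g x - κg * x| ≤ C)
    (hcond1 : α < 2 * (1 - 1 / K) → β ≤ (1 / 4) * α ^ 2 * K ^ 2)
    (hcond2 : 2 * (1 - 1 / K) ≤ α → β < (K - 1) * (α * K - K + 1)) :
    ∃ φ : ℝ → ℝ, Continuous φ ∧ (∀ x : ℝ, φ (φ x) = h (φ (f x)) + g x) ∧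
      ¬ ∃ M : ℝ, ∀ x : ℝ, |φ x| ≤ M := by
  have hK0 : 0 < K := by linarith
  obtain ⟨L, hL0, hLK, hLq⟩ := exists_sq_add_le_mul hK hα hcond1 hcond2
  obtain ⟨H, -, hhH, hHlip, hHlin⟩ := exists_inverse_of_expanding hK0 hh hexp hκh
  obtain ⟨F, hFf, -, hFlip, hFlin⟩ := exists_inverse_of_expanding hα hf hfexp hκf
  have hKκh : K ≤ |κh| := NearLinear.le_abs_of_expanding hκh hexp
  have hακf : α ≤ |κf| := NearLinear.le_abs_of_expanding hκf hfexp
  have hκgβ : |κg| ≤ β := NearLinear.abs_le_of_lipschitz hκg hglip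
  have hslope : K * α * L ≤ |κh * κf| * L := by
    rw [abs_mul]; gcongr
  obtain ⟨ℓ, hℓL, hℓ⟩ := exists_root_abs_le (a := κh * κf) (κ := κg) hL0 <| abs_le.mpr
    ⟨by nlinarith [abs_le.mp hκgβ], by linarith [abs_le.mp hκgβ]⟩
  obtain ⟨φ, hφc, hφlin, hφfix⟩ := exists_fixedPoint_nearLinear (Ψ := equationOperator H F g)
    (c := K⁻¹ * (L + 1)) hℓL (by rw [inv_mul_lt_one₀ hK0]; linarith)
    (fun φ => continuous_equationOperator (continuous_of_abs_sub_le_mul hHlip)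
      (continuous_of_abs_sub_le_mul hFlip) hg)
    (fun φ hφ => hHlin.equationOperator hFlin hκg hφ
      (abs_pos.mp (by linarith)) (abs_pos.mp (by linarith)) hℓ)
    (fun φ => lipschitz_equationOperator hK0 hα hL0 hLq hHlip hFlip hglip)
    (fun φ ψ D hφ hD => abs_equationOperator_sub_le hK0 hL0 hHlip hφ hD)
  refine ⟨φ, hφc, solution_of_equationOperator_eq hhH hFf hφfix, hφlin.not_bounded ?_⟩
  rintro rfl
  exact hκg0 (by simpa using hℓ.symm)

theorem stmt_16 (h f g : ℝ → ℝ) (hh : Continuous h) (hf : Continuous f) (hg : Continuous g)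
    (K : ℝ) (hK : 1 < K) (hexp : ∀ x y : ℝ, K * |x - y| ≤ |h x - h y|)
    (κh : ℝ) (hκh : ∃ C : ℝ, ∀ x : ℝ, |h x - κh * x| ≤ C)
    (α : ℝ) (hα : 0 < α) (hfexp : ∀ x y : ℝ, α * |x - y| ≤ |f x - f y|)
    (κf : ℝ) (hκf : ∃ C : ℝ, ∀ x : ℝ, |f x - κf * x| ≤ C)
    (β : ℝ) (hβ : 0 ≤ β) (hglip : ∀ x y : ℝ, |g x - g y| ≤ β * |x - y|)
    (κg : ℝ) (hκg0 : κg ≠ 0) (hκg : ∃ C : ℝ, ∀ x : ℝ, |g x - κg * x| ≤ C)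
    (hcond1 : α < 2 * (1 - 1 / K) → β ≤ (1 / 4) * α ^ 2 * K ^ 2)
    (hcond2 : 2 * (1 - 1 / K) ≤ α → β < (K - 1) * (α * K - K + 1)) :
    ∃ φ : ℝ → ℝ, Continuous φ ∧ (∀ x : ℝ, φ (φ x) = h (φ (f x)) + g x) ∧
      ¬ ∃ M : ℝ, ∀ x : ℝ, |φ x| ≤ M :=
  stmt_16_general h f g hh hf hg K hK hexp κh hκh α hα hfexp κf hκf β hglip κg hκg0 hκg hcond1
    hcond2
end

section
/- Suppose K > 1, α > 0, β ≥ 0 with α²K² ≥ 4β, and κ_h, κ_f, κ_g ∈ ℝ with |κ_h| ≥ K, |κ_f| ≥ α, |κ_g| ≤ β. Then κ_h²κ_f² + 4κ_g ≥ α²K² - 4β ≥ 0, and the root κ* = (κ_hκ_f - sign(κ_hκ_f)·√(κ_h²κ_f² + 4κ_g))/2 of the quadratic κ² - κ_hκ_f·κ - κ_g = 0 satisfies |κ*| ≤ (αK - √(α²K² - 4β))/2. -/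
lemma stmt_17_aux (M a t v κg β : ℝ) (hM : 0 < M) (haM : M ≤ a) (ht0 : 0 ≤ t)
    (hv0 : 0 ≤ v) (hvM : v ≤ M) (ht2 : t ^ 2 = a ^ 2 + 4 * κg)
    (hv2 : v ^ 2 = M ^ 2 - 4 * β) (hκgl : -β ≤ κg) (hκgu : κg ≤ β) :
    |a - t| ≤ M - v := by
  rw [abs_le]
  constructor
  · have h1 : (a - M + v) ^ 2 ≤ t ^ 2 := by
      nlinarith [mul_nonneg (sub_nonneg.mpr hvM) (sub_nonneg.mpr haM)]
    have h2 : 0 ≤ a - M + v := by linarith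
    nlinarith [h1, h2, ht0]
  · have h1 : t ^ 2 ≤ (a + M - v) ^ 2 := by
      nlinarith [mul_nonneg (sub_nonneg.mpr hvM) (sub_nonneg.mpr (le_trans hvM haM))]
    have h2 : 0 ≤ a + M - v := by linarith
    nlinarith [h1, h2, ht0]

theorem stmt_17 (K α β κh κf κg : ℝ) (hK : 1 < K) (hα : 0 < α) (hβ : 0 ≤ β)
    (hdisc : 4 * β ≤ α ^ 2 * K ^ 2)
    (hκh : K ≤ |κh|) (hκf : α ≤ |κf|) (hκg : |κg| ≤ β) :
    α ^ 2 * K ^ 2 - 4 * β ≤ κh ^ 2 * κf ^ 2 + 4 * κg ∧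
    (0 : ℝ) ≤ α ^ 2 * K ^ 2 - 4 * β ∧
    (let κs : ℝ := (κh * κf - Real.sign (κh * κf) *
        Real.sqrt (κh ^ 2 * κf ^ 2 + 4 * κg)) / 2
     κs ^ 2 = κh * κf * κs + κg ∧
     |κs| ≤ (α * K - Real.sqrt (α ^ 2 * K ^ 2 - 4 * β)) / 2) := by
  have hK0 : (0:ℝ) < K := lt_trans one_pos hK
  have hM : 0 < α * K := mul_pos hα hK0
  have hp : α * K ≤ |κh * κf| := by
    rw [abs_mul]
    calc α * K ≤ |κf| * |κh| :=
      mul_le_mul hκf hκh (le_of_lt hK0) (abs_nonneg _)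
    _ = |κh| * |κf| := mul_comm _ _
  have hpne : κh * κf ≠ 0 := by
    intro h; rw [h, abs_zero] at hp; linarith
  have hκgl : -β ≤ κg := (abs_le.mp hκg).1
  have hκgu : κg ≤ β := (abs_le.mp hκg).2
  have ha2 : (α * K) ^ 2 ≤ (κh * κf) ^ 2 := by
    have := sq_abs (κh * κf)
    nlinarith [pow_le_pow_left₀ (le_of_lt hM) hp 2]
  have hgap : α ^ 2 * K ^ 2 - 4 * β ≤ κh ^ 2 * κf ^ 2 + 4 * κg := by nlinarith
  refine ⟨hgap, by linarith, ?_⟩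
  set s := Real.sign (κh * κf) with hsdef
  set t := Real.sqrt (κh ^ 2 * κf ^ 2 + 4 * κg) with htdef
  set v := Real.sqrt (α ^ 2 * K ^ 2 - 4 * β) with hvdef
  have hDnn : (0:ℝ) ≤ κh ^ 2 * κf ^ 2 + 4 * κg := by linarith
  have ht2 : t ^ 2 = κh ^ 2 * κf ^ 2 + 4 * κg := Real.sq_sqrt hDnn
  have ht0 : 0 ≤ t := Real.sqrt_nonneg _
  have hv2 : v ^ 2 = α ^ 2 * K ^ 2 - 4 * β := Real.sq_sqrt (by linarith)
  have hv0 : 0 ≤ v := Real.sqrt_nonneg _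
  have hvM : v ≤ α * K := by nlinarith
  have hs : s = -1 ∨ s = 1 := Real.sign_apply_eq_of_ne_zero _ hpne
  have hs2 : s ^ 2 = 1 := by rcases hs with h | h <;> rw [h] <;> norm_num
  have hsabs : |s| = 1 := by rcases hs with h | h <;> rw [h] <;> norm_num
  have hsp : s * (κh * κf) = |κh * κf| := by
    rcases lt_trichotomy (κh * κf) 0 with h | h | h
    · rw [hsdef, Real.sign_of_neg h, abs_of_neg h]; ring
    · exact absurd h hpne
    · rw [hsdef, Real.sign_of_pos h, abs_of_pos h]; ring
  clear_value s t v
  show ((κh * κf - s * t) / 2) ^ 2 = κh * κf * ((κh * κf - s * t) / 2) + κg ∧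
      |(κh * κf - s * t) / 2| ≤ (α * K - v) / 2
  constructor
  · linear_combination (t ^ 2 / 4) * hs2 + (1 / 4) * ht2
  · have hmul : s * (κh * κf - s * t) = |κh * κf| - t := by
      linear_combination hsp - t * hs2
    have habs : |κh * κf - s * t| = |(|κh * κf| - t)| := by
      rw [← hmul, abs_mul, hsabs, one_mul]
    rw [abs_div, habs, abs_of_pos (by norm_num : (0:ℝ) < 2)]
    rw [div_le_div_iff_of_pos_right (by norm_num : (0:ℝ) < 2)]
    have ha2' : |κh * κf| ^ 2 = κh ^ 2 * κf ^ 2 := by rw [sq_abs]; ring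
    exact stmt_17_aux (α * K) (|κh * κf|) t v κg β hM hp ht0 hv0 hvM
      (by rw [ht2, ha2']) (by nlinarith) hκgl hκgu
end

section
/- Suppose h, f, g : ℝ → ℝ are strictly increasing continuous functions, h is surjective with unique zero ξ₀, f(x) < x for all x ∈ ℝ, g has a fixed point x₁ with ξ₀ < x₁ ≤ f⁻¹(ξ₀), and g(x) ≥ x for all x ≥ x₁. Set x₀ := f(x₁) and x₃ := h(x₁) + x₁, and choose any x₂ with x₁ < x₂ < x₃. Then for any strictly increasing continuous surjections φ₀ : [x₀, x₁] → [x₁, x₂] and φ₁ : [x₁, x₂] → [x₂, x₃], there exists a unique continuous function φ : ℝ → ℝ extending φ₀ and φ₁ such that φ(φ(x)) = h(φ(f(x))) + g(x) for all x ∈ ℝ. -/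
open Set Function Filter Topology

/-!
Above `x₁` the equation determines `φ` on `φ(I)` from `φ` on `I`: for `y = φ x`,
`φ y = h (φ (f (φ⁻¹ y))) + g (φ⁻¹ y)`. Starting from an order isomorphism `Φ₀` of `ℝ` extending
`φ₀` and `φ₁`, the step keeping `Φ₀` up to `x₂` and applying this rule beyond produces order
isomorphisms that agree on half-lines `(-∞, cₙ]`, where `c (n + 2) ≥ c n + h (Φ₀ (f x₂))` and
`Φ₀ (f x₂) ≥ Φ₀ (f x₁) = x₁ > ξ₀`. They stabilise to an increasing solution on `[f x₁, ∞)`, and the same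
growth shows that every solution agrees with it there.

Below `f x₁` the equation, read as `φ (f x) = h⁻¹ (φ (φ x) - g x)`, determines `φ` on `f(I)` from
`φ` on `I`, because `φ` never leaves `[f x₁, ∞)`, where it is already known: if `φ x ≥ f x₁` then
`φ (φ x) ≥ x₁ = g x₁ ≥ g x`, so `φ (f x) ≥ ξ₀ ≥ f x₁`. As the iterates of `f` tend to `-∞`, this
determines `φ` on all of `ℝ`.
-/

theorem MonotoneOn.apply_eq_of_image_Icc_eq {u : ℝ → ℝ} {a b c d : ℝ} (hab : a ≤ b)
    (hu : MonotoneOn u (Icc a b)) (himg : u '' Icc a b = Icc c d) : u a = c ∧ u b = d := by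
  have hsub : Icc c d ⊆ Icc (u a) (u b) := himg ▸ hu.image_Icc_subset
  have hcd : c ≤ d := nonempty_Icc.1 (himg ▸ (nonempty_Icc.2 hab).image u)
  obtain ⟨h1, h2⟩ := (Icc_subset_Icc_iff hcd).1 hsub
  have ha : u a ∈ Icc c d := himg ▸ mem_image_of_mem u (left_mem_Icc.2 hab)
  have hb : u b ∈ Icc c d := himg ▸ mem_image_of_mem u (right_mem_Icc.2 hab)
  exact ⟨le_antisymm h1 ha.1, le_antisymm hb.2 h2⟩

theorem exists_orderIso_eqOn_Icc {u : ℝ → ℝ} {a b c d : ℝ} (hab : a ≤ b)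
    (hu : StrictMonoOn u (Icc a b)) (himg : u '' Icc a b = Icc c d) :
    ∃ e : ℝ ≃o ℝ, EqOn e u (Icc a b) := by
  classical
  obtain ⟨hua, hub⟩ := hu.monotoneOn.apply_eq_of_image_Icc_eq hab himg
  have hmem : ∀ x ∈ Icc a b, u x ∈ Icc c d := fun x hx => himg ▸ mem_image_of_mem u hx
  set w : ℝ → ℝ := fun x => if x < a then x - a + c else if x ≤ b then u x else x - b + d
  have hw : EqOn w u (Icc a b) := fun x hx => by simp [w, not_lt.2 hx.1, hx.2]
  have hcd : c ≤ d := hua ▸ hub ▸ hu.monotoneOn (left_mem_Icc.2 hab) (right_mem_Icc.2 hab) hab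
  have hm : StrictMono w := by
    intro x y hxy
    simp only [w]
    split_ifs
    all_goals first
      | linarith
      | exact hu ⟨by linarith, by linarith⟩ ⟨by linarith, by linarith⟩ hxy
      | linarith [(hmem y ⟨by linarith, by linarith⟩).1]
      | linarith [(hmem x ⟨by linarith, by linarith⟩).2]
  have hs : Surjective w := by
    intro y
    rcases lt_or_ge y c with hy | hy
    · exact ⟨y - c + a, by simp [w, hy]⟩
    rcases le_or_gt y d with hy' | hy'
    · obtain ⟨x, hx, rfl⟩ : y ∈ u '' Icc a b := himg ▸ ⟨hy, hy'⟩
      exact ⟨x, hw hx⟩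
    · exact ⟨y - d + b, by simp only [w]; rw [if_neg (by linarith), if_neg (by linarith)]; ring⟩
  exact ⟨hm.orderIsoOfSurjective w hs, fun x hx => hw hx⟩

theorem exists_orderIso_eqOn_Iic_eqOn_Ici {α β : Type*} [LinearOrder α] [LinearOrder β]
    {u v : α → β} {c : α} (hu : StrictMonoOn u (Iic c)) (hv : StrictMonoOn v (Ici c))
    (huv : u c = v c) (hsu : Iic (u c) ⊆ u '' Iic c) (hsv : Ici (v c) ⊆ v '' Ici c) :
    ∃ e : α ≃o β, EqOn e u (Iic c) ∧ EqOn e v (Ici c) := by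
  classical
  set w : α → β := fun x => if x ≤ c then u x else v x
  have hwu : EqOn w u (Iic c) := fun x hx => if_pos hx
  have hwv : EqOn w v (Ici c) := by
    intro x hx
    rcases (mem_Ici.1 hx).eq_or_lt with rfl | hlt
    · exact (hwu le_rfl).trans huv
    · exact if_neg (not_le.2 hlt)
  have hm : StrictMono w := (hu.congr hwu.symm).Iic_union_Ici (hv.congr hwv.symm)
  have hs : Surjective w := by
    intro y
    rcases le_total y (u c) with hy | hy
    · obtain ⟨x, hx, rfl⟩ := hsu hy
      exact ⟨x, hwu hx⟩
    · obtain ⟨x, hx, rfl⟩ := hsv (huv ▸ hy)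
      exact ⟨x, hwv hx⟩
  exact ⟨hm.orderIsoOfSurjective w hs, hwu, hwv⟩

theorem OrderIso.exists_eqOn_Iic_eqOn_Ici {α β : Type*} [LinearOrder α] [LinearOrder β]
    (e₁ e₂ : α ≃o β) {c : α} (h : e₁ c = e₂ c) :
    ∃ e : α ≃o β, EqOn e e₁ (Iic c) ∧ EqOn e e₂ (Ici c) :=
  exists_orderIso_eqOn_Iic_eqOn_Ici (e₁.strictMono.strictMonoOn _) (e₂.strictMono.strictMonoOn _) h
    (fun y hy => ⟨e₁.symm y, e₁.symm_apply_le.2 hy, e₁.apply_symm_apply y⟩)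
    (fun y hy => ⟨e₂.symm y, e₂.le_symm_apply.2 hy, e₂.apply_symm_apply y⟩)

theorem exists_orderIso_eqOn_Icc_eqOn_Icc {u v : ℝ → ℝ} {a b c p q r : ℝ} (hab : a ≤ b)
    (hbc : b ≤ c) (hu : StrictMonoOn u (Icc a b)) (hus : u '' Icc a b = Icc p q)
    (hv : StrictMonoOn v (Icc b c)) (hvs : v '' Icc b c = Icc q r) :
    ∃ e : ℝ ≃o ℝ, EqOn e u (Icc a b) ∧ EqOn e v (Icc b c) ∧ e a = p ∧ e b = q ∧ e c = r := by
  obtain ⟨e₀, he₀⟩ := exists_orderIso_eqOn_Icc hab hu hus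
  obtain ⟨e₁, he₁⟩ := exists_orderIso_eqOn_Icc hbc hv hvs
  obtain ⟨hua, hub⟩ := hu.monotoneOn.apply_eq_of_image_Icc_eq hab hus
  obtain ⟨hvb, hvc⟩ := hv.monotoneOn.apply_eq_of_image_Icc_eq hbc hvs
  have hb : e₀ b = e₁ b := by
    rw [he₀ (right_mem_Icc.2 hab), he₁ (left_mem_Icc.2 hbc), hub, hvb]
  obtain ⟨e, he, he'⟩ := OrderIso.exists_eqOn_Iic_eqOn_Ici e₀ e₁ hb
  have heu : EqOn e u (Icc a b) := fun x hx => (he hx.2).trans (he₀ hx)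
  have hev : EqOn e v (Icc b c) := fun x hx => (he' hx.1).trans (he₁ hx)
  exact ⟨e, heu, hev, (heu (left_mem_Icc.2 hab)).trans hua, (heu (right_mem_Icc.2 hab)).trans hub,
    (hev (right_mem_Icc.2 hbc)).trans hvc⟩

theorem exists_orderIso_eqOn_Iic {f : ℝ → ℝ} {c : ℝ} (hm : StrictMonoOn f (Iic c))
    (hc : ContinuousOn f (Iic c)) (hbot : Tendsto f atBot atBot) :
    ∃ e : ℝ ≃o ℝ, EqOn e f (Iic c) := by
  have hsurj : Iic (f c) ⊆ f '' Iic c := by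
    intro y hy
    obtain ⟨x₀, hx₀y, hx₀c⟩ :=
      ((hbot.eventually (eventually_le_atBot y)).and (eventually_le_atBot c)).exists
    obtain ⟨x, hx, rfl⟩ := intermediate_value_Icc hx₀c (hc.mono Icc_subset_Iic_self) ⟨hx₀y, hy⟩
    exact ⟨x, hx.2, rfl⟩
  obtain ⟨e, he, -⟩ := exists_orderIso_eqOn_Iic_eqOn_Ici (v := fun x => x - c + f c) hm
    (fun x _ y _ hxy => by simpa using hxy) (by simp) hsurj
    (fun y hy => ⟨y - f c + c, by simpa using hy, by ring⟩)
  exact ⟨e, he⟩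

theorem exists_eqOn_of_eqOn_succ {α β : Type*} {F : ℕ → α → β} {s : ℕ → Set α}
    (hs : Monotone s) (hcov : ∀ x, ∃ n, x ∈ s n) (hF : ∀ n, EqOn (F (n + 1)) (F n) (s n)) :
    ∃ G : α → β, ∀ n, EqOn G (F n) (s n) := by
  classical
  have hstable : ∀ n m, n ≤ m → EqOn (F m) (F n) (s n) := by
    intro n m hnm
    induction m, hnm using Nat.le_induction with
    | base => exact eqOn_refl _ _
    | succ m hnm ih => exact fun x hx => (hF m (hs hnm hx)).trans (ih hx)
  exact ⟨fun x => F (Nat.find (hcov x)) x, fun n x hx =>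
    (hstable _ n (Nat.find_min' _ hx) (Nat.find_spec (hcov x))).symm⟩

theorem continuous_of_eqOn_of_mem_nhds {X Y : Type*} [TopologicalSpace X] [TopologicalSpace Y]
    {G : X → Y} {F : ℕ → X → Y} {s : ℕ → Set X} (hF : ∀ n, Continuous (F n))
    (hG : ∀ n, EqOn G (F n) (s n)) (hs : ∀ x, ∃ n, s n ∈ 𝓝 x) : Continuous G :=
  continuous_iff_continuousAt.2 fun x =>
    let ⟨n, hn⟩ := hs x
    (hF n).continuousAt.congr ((hG n).eventuallyEq_of_mem hn).symm

theorem exists_lt_of_add_le_add_two {u : ℕ → ℝ} {d : ℝ} (hd : 0 < d)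
    (hu : ∀ n, u n + d ≤ u (n + 2)) (z : ℝ) : ∃ n, z < u n := by
  have hlin : ∀ k : ℕ, u 0 + k * d ≤ u (2 * k) := by
    intro k
    induction k with
    | zero => simp
    | succ k ih =>
      rw [show 2 * (k + 1) = 2 * k + 2 by ring]
      push_cast
      linarith [hu (2 * k)]
  obtain ⟨k, hk⟩ := exists_nat_gt ((z - u 0) / d)
  refine ⟨2 * k, lt_of_lt_of_le ?_ (hlin k)⟩
  rw [div_lt_iff₀ hd] at hk
  linarith

theorem tendsto_iterate_atBot_of_map_lt {α : Type*} [ConditionallyCompleteLinearOrder α]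
    [TopologicalSpace α] [OrderTopology α] {f : α → α} {c : α} (hf : Continuous f)
    (hm : Monotone f) (hlt : ∀ x ≤ c, f x < x) : Tendsto (fun n => f^[n] c) atTop atBot := by
  have hanti := hm.antitone_iterate_of_map_le (hlt c le_rfl).le
  refine (tendsto_atTop_of_antitone hanti).resolve_right ?_
  rintro ⟨L, hL⟩
  have hLc : L ≤ c := le_of_tendsto' hL fun n => hanti (Nat.zero_le n)
  exact (hlt L hLc).ne (isFixedPt_of_tendsto_iterate hL hf.continuousAt)

theorem forall_of_forall_ge_of_map {f : ℝ → ℝ} {c : ℝ} (hf : Continuous f) (hm : Monotone f)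
    (hlt : ∀ x ≤ c, f x < x) {P : ℝ → Prop} (hbase : ∀ t, f c ≤ t → P t)
    (hstep : ∀ x ≤ c, P x → P (f x)) (t : ℝ) : P t := by
  have hanti := hm.antitone_iterate_of_map_le (hlt c le_rfl).le
  have hP : ∀ n t, f^[n] c ≤ t → P t := by
    intro n
    induction n with
    | zero => exact fun t ht => hbase t ((hlt c le_rfl).le.trans ht)
    | succ n ih =>
      intro t ht
      rcases le_or_gt (f c) t with hct | htc
      · exact hbase t hct
      rw [iterate_succ_apply'] at ht
      obtain ⟨x, hx, rfl⟩ :=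
        intermediate_value_Icc (hanti (Nat.zero_le n)) hf.continuousOn ⟨ht, htc.le⟩
      exact hstep x hx.2 (ih x hx.1)
  obtain ⟨n, hn⟩ := ((tendsto_iterate_atBot_of_map_lt hf hm hlt).eventually
    (eventually_le_atBot t)).exists
  exact hP n t hn

section Forward

variable (h f g : ℝ → ℝ) (Φ₀ : ℝ ≃o ℝ) (b : ℝ)

noncomputable def forwardExt (e : ℝ ≃o ℝ) (y : ℝ) : ℝ :=
  h (e (f (e.symm y))) + g (e.symm y)

noncomputable def forwardStep (e : ℝ ≃o ℝ) (y : ℝ) : ℝ :=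
  if y ≤ b then Φ₀ y else forwardExt h f g e y

variable {h f g Φ₀ b}

theorem forwardExt_apply_apply (e : ℝ ≃o ℝ) (x : ℝ) :
    forwardExt h f g e (e x) = h (e (f x)) + g x := by
  simp [forwardExt]

theorem forwardExt_eqOn {e e' : ℝ ≃o ℝ} {c : ℝ} (hf : ∀ x, f x ≤ x) (he : EqOn e e' (Iic c)) :
    EqOn (forwardExt h f g e) (forwardExt h f g e') (Iic (e c)) := by
  intro y hy
  obtain ⟨x, rfl⟩ := e.surjective y
  have hx : x ≤ c := e.le_iff_le.1 hy
  rw [forwardExt_apply_apply, he hx, forwardExt_apply_apply, he ((hf x).trans hx)]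

theorem strictMono_forwardExt (hh : Monotone h) (hf : Monotone f) (hg : StrictMono g)
    (e : ℝ ≃o ℝ) : StrictMono (forwardExt h f g e) := fun _ _ hyz =>
  add_lt_add_of_le_of_lt (hh (e.monotone (hf (e.symm.monotone hyz.le))))
    (hg (e.symm.strictMono hyz))

theorem continuous_forwardExt (hh : Continuous h) (hf : Continuous f) (hg : Continuous g)
    (e : ℝ ≃o ℝ) : Continuous (forwardExt h f g e) :=
  (hh.comp (e.continuous.comp (hf.comp e.symm.continuous))).add (hg.comp e.symm.continuous)

theorem tendsto_forwardExt_atTop (hh : Monotone h) (hf : Monotone f)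
    (hg : Tendsto g atTop atTop) (e : ℝ ≃o ℝ) : Tendsto (forwardExt h f g e) atTop atTop := by
  refine tendsto_atTop_add_left_of_le' atTop (h (e (f (e.symm 0)))) ?_
    (hg.comp e.symm.tendsto_atTop)
  filter_upwards [eventually_ge_atTop 0] with y hy
  exact hh (e.monotone (hf (e.symm.monotone hy)))

theorem forwardStep_eqOn_Ici {e : ℝ ≃o ℝ} (hR : forwardExt h f g e b = Φ₀ b) :
    EqOn (forwardStep h f g Φ₀ b e) (forwardExt h f g e) (Ici b) := by
  intro y hy
  rcases (mem_Ici.1 hy).eq_or_lt with rfl | hlt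
  · simp [forwardStep, hR]
  · simp [forwardStep, not_le.2 hlt]

theorem forwardStep_apply_apply {e : ℝ ≃o ℝ} (hR : forwardExt h f g e b = Φ₀ b) {x : ℝ}
    (hx : b ≤ e x) : forwardStep h f g Φ₀ b e (e x) = h (e (f x)) + g x := by
  rw [forwardStep_eqOn_Ici hR hx, forwardExt_apply_apply]

theorem forwardStep_eqOn {e e' : ℝ ≃o ℝ} {c : ℝ} (hf : ∀ x, f x ≤ x) (he : EqOn e e' (Iic c)) :
    EqOn (forwardStep h f g Φ₀ b e) (forwardStep h f g Φ₀ b e') (Iic (e c)) := by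
  intro y hy
  simp only [forwardStep]
  split_ifs
  · rfl
  · exact forwardExt_eqOn hf he hy

theorem exists_orderIso_forwardStep (hh : Continuous h) (hf : Continuous f) (hg : Continuous g)
    (hhm : Monotone h) (hfm : Monotone f) (hgm : StrictMono g) (hgt : Tendsto g atTop atTop)
    {e : ℝ ≃o ℝ} (hR : forwardExt h f g e b = Φ₀ b) :
    ∃ e' : ℝ ≃o ℝ, ⇑e' = forwardStep h f g Φ₀ b e := by
  have hmono : StrictMono (forwardStep h f g Φ₀ b e) :=
    (Φ₀.strictMono.strictMonoOn _ |>.congr fun y hy => (if_pos hy).symm).Iic_union_Ici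
      ((strictMono_forwardExt hhm hfm hgm e).strictMonoOn _ |>.congr (forwardStep_eqOn_Ici hR).symm)
  have hcont : Continuous (forwardStep h f g Φ₀ b e) :=
    Continuous.if_le Φ₀.continuous (continuous_forwardExt hh hf hg e) continuous_id
      continuous_const fun y hy => hy ▸ hR.symm
  have hsurj : Surjective (forwardStep h f g Φ₀ b e) := by
    refine hcont.surjective ?_ ?_
    · refine (tendsto_forwardExt_atTop hhm hfm hgt e).congr' ?_
      filter_upwards [eventually_ge_atTop b] with y hy
      exact (forwardStep_eqOn_Ici hR hy).symm
    · refine Φ₀.tendsto_atBot.congr' ?_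
      filter_upwards [eventually_le_atBot b] with y hy
      exact (if_pos hy).symm
  exact ⟨hmono.orderIsoOfSurjective _ hsurj, hmono.coe_orderIsoOfSurjective _ hsurj⟩

theorem exists_forwardStep_seq (hh : Continuous h) (hf : Continuous f) (hg : Continuous g)
    (hhm : Monotone h) (hfm : Monotone f) (hgm : StrictMono g) (hgt : Tendsto g atTop atTop)
    (hfx : ∀ x, f x ≤ x) (hb : b ≤ Φ₀ b) (hR : forwardExt h f g Φ₀ b = Φ₀ b) :
    ∃ E : ℕ → ℝ ≃o ℝ, E 0 = Φ₀ ∧ (∀ n, ⇑(E (n + 1)) = forwardStep h f g Φ₀ b (E n)) ∧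
      ∀ n, forwardExt h f g (E n) b = Φ₀ b := by
  have hRe : ∀ e : ℝ ≃o ℝ, EqOn e Φ₀ (Iic b) → forwardExt h f g e b = Φ₀ b := fun e he =>
    (forwardExt_eqOn hfx he (show b ≤ e b from he (mem_Iic.2 le_rfl) ▸ hb)).trans hR
  have hstep : ∀ e : {e : ℝ ≃o ℝ // EqOn e Φ₀ (Iic b)}, ∃ e' : {e : ℝ ≃o ℝ // EqOn e Φ₀ (Iic b)},
      ⇑e'.1 = forwardStep h f g Φ₀ b e.1 := by
    rintro ⟨e, he⟩
    obtain ⟨e', he'⟩ := exists_orderIso_forwardStep hh hf hg hhm hfm hgm hgt (hRe e he)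
    exact ⟨⟨e', fun y hy => by rw [he']; exact if_pos hy⟩, he'⟩
  choose next hnext using hstep
  refine ⟨fun n => (next^[n] ⟨Φ₀, eqOn_refl _ _⟩).1, rfl, fun n => ?_,
    fun n => hRe _ (next^[n] ⟨Φ₀, eqOn_refl _ _⟩).2⟩
  simp only [iterate_succ_apply']
  exact hnext _

theorem exists_forward_stabilization (hhm : Monotone h) (hfm : Monotone f) (hfx : ∀ x, f x ≤ x)
    (hgx : ∀ x, b ≤ x → x ≤ g x) (hb : b ≤ Φ₀ b) (hd : 0 < h (Φ₀ (f b))) {E : ℕ → ℝ ≃o ℝ}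
    (hE0 : E 0 = Φ₀) (hES : ∀ n, ⇑(E (n + 1)) = forwardStep h f g Φ₀ b (E n))
    (hRn : ∀ n, forwardExt h f g (E n) b = Φ₀ b) :
    ∃ c : ℕ → ℝ, c 0 = b ∧ Monotone c ∧ (∀ z, ∃ n, z < c n) ∧
      ∀ n, b ≤ c n ∧ c (n + 1) = E n (c n) ∧ EqOn (E (n + 1)) (E n) (Iic (c n)) := by
  have hEb : ∀ n, EqOn (E n) Φ₀ (Iic b) := by
    rintro (_ | n) y hy
    · rw [hE0]
    · rw [hES]; exact if_pos hy
  set c : ℕ → ℝ := fun n => Nat.rec b (fun k ck => E k ck) n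
  have hcS : ∀ n, c (n + 1) = E n (c n) := fun n => rfl
  have hbc : ∀ n, b ≤ c n := by
    intro n
    induction n with
    | zero => exact le_rfl
    | succ n ih =>
      rw [hcS]
      exact hb.trans ((hEb n (mem_Iic.2 le_rfl)).symm.trans_le ((E n).monotone ih))
  have hagree : ∀ n, EqOn (E (n + 1)) (E n) (Iic (c n)) := by
    intro n
    induction n with
    | zero => intro y hy; rw [hES, hE0]; exact if_pos hy
    | succ n ih =>
      have key := forwardStep_eqOn (h := h) (g := g) (Φ₀ := Φ₀) (b := b) hfx ih
      rw [← hES, ← hES, ih (mem_Iic.2 le_rfl)] at key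
      exact key
  have hmono : Monotone c := by
    refine monotone_nat_of_le_succ fun n => ?_
    induction n with
    | zero => exact hb.trans (hEb 0 (mem_Iic.2 le_rfl)).ge
    | succ n ih =>
      calc c (n + 1) = E (n + 1) (c n) := (hagree n (mem_Iic.2 le_rfl)).symm
        _ ≤ E (n + 1) (c (n + 1)) := (E (n + 1)).monotone ih
  have hgrow : ∀ n, c n + h (Φ₀ (f b)) ≤ c (n + 2) := by
    intro n
    have hstep : c (n + 2) = h (E n (f (c n))) + g (c n) := by
      show E (n + 1) (E n (c n)) = _
      rw [hES n]
      exact forwardStep_apply_apply (hRn n) (hbc (n + 1))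
    have hfb : h (Φ₀ (f b)) ≤ h (E n (f (c n))) :=
      hEb n (mem_Iic.2 (hfx b)) ▸ hhm ((E n).monotone (hfm (hbc n)))
    linarith [hgx _ (hbc n)]
  exact ⟨c, rfl, hmono, exists_lt_of_add_le_add_two hd hgrow, fun n => ⟨hbc n, hcS n, hagree n⟩⟩

theorem exists_forward_solution (hh : Continuous h) (hf : Continuous f) (hg : Continuous g)
    (hhm : Monotone h) (hfm : Monotone f) (hgm : StrictMono g) (hfx : ∀ x, f x ≤ x)
    (hgx : ∀ x, b ≤ x → x ≤ g x) (hb : b ≤ Φ₀ b) (hR : forwardExt h f g Φ₀ b = Φ₀ b)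
    (hd : 0 < h (Φ₀ (f b))) :
    ∃ ψ : ℝ → ℝ, Continuous ψ ∧ StrictMono ψ ∧ EqOn ψ Φ₀ (Iic b) ∧
      ∀ x, b ≤ ψ x → ψ (ψ x) = h (ψ (f x)) + g x := by
  have hgt : Tendsto g atTop atTop :=
    tendsto_atTop_mono' atTop ((eventually_ge_atTop b).mono hgx) tendsto_id
  obtain ⟨E, hE0, hES, hRn⟩ := exists_forwardStep_seq hh hf hg hhm hfm hgm hgt hfx hb hR
  obtain ⟨c, hc0, hcm, hcov, hc⟩ := exists_forward_stabilization hhm hfm hfx hgx hb hd hE0 hES hRn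
  obtain ⟨ψ, hψ⟩ := exists_eqOn_of_eqOn_succ (F := fun n => ⇑(E n)) (s := fun n => Iic (c n))
    (fun m n hmn => Iic_subset_Iic.2 (hcm hmn)) (fun x => (hcov x).imp fun n hn => hn.le)
    (fun n => (hc n).2.2)
  refine ⟨ψ, continuous_of_eqOn_of_mem_nhds (fun n => (E n).continuous) hψ
    (fun x => (hcov x).imp fun n hn => Iic_mem_nhds hn), fun x y hxy => ?_, ?_, fun x hx => ?_⟩
  · obtain ⟨n, hn⟩ := hcov y
    rw [hψ n (hxy.le.trans hn.le), hψ n hn.le]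
    exact (E n).strictMono hxy
  · simpa [hc0, hE0] using hψ 0
  · obtain ⟨n, hn⟩ := hcov x
    have hψx : ψ x = E n x := hψ n hn.le
    have hEx : E n x ≤ c (n + 1) := (hc n).2.1 ▸ (E n).monotone hn.le
    rw [hψx, hψ (n + 1) hEx, hES n, forwardStep_apply_apply (hRn n) (hψx ▸ hx),
      hψ n ((hfx x).trans hn.le)]

end Forward

theorem eqOn_Ici_of_eqOn_Icc_of_iterative_eq {h f g φ ψ : ℝ → ℝ} {b x₁ : ℝ} (hh : Monotone h)
    (hfm : Monotone f) (hfx : ∀ x, f x ≤ x) (hgx : ∀ x, b ≤ x → x ≤ g x) (hψc : Continuous ψ)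
    (hψm : Monotone ψ) (hx₁ : x₁ ≤ b) (hψx₁ : ψ x₁ = b) (hd : 0 < h (ψ (f b)))
    (hψ : ∀ x, x₁ ≤ x → ψ (ψ x) = h (ψ (f x)) + g x)
    (hφ : ∀ x, x₁ ≤ x → φ (φ x) = h (φ (f x)) + g x) (h0 : EqOn φ ψ (Icc (f x₁) b)) :
    EqOn φ ψ (Ici (f x₁)) := by
  have hstep : ∀ d, x₁ ≤ d → EqOn φ ψ (Icc (f x₁) d) → EqOn φ ψ (Icc (f x₁) (ψ d)) := by
    intro d hd hEq y hy
    rcases le_total y b with hyb | hby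
    · exact h0 ⟨hy.1, hyb⟩
    obtain ⟨x, hx, rfl⟩ := intermediate_value_Icc hd hψc.continuousOn ⟨hψx₁ ▸ hby, hy.2⟩
    have hxm : x ∈ Icc (f x₁) d := ⟨(hfx x₁).trans hx.1, hx.2⟩
    have hfxm : f x ∈ Icc (f x₁) d := ⟨hfm hx.1, (hfx x).trans hx.2⟩
    calc φ (ψ x) = φ (φ x) := by rw [hEq hxm]
      _ = h (φ (f x)) + g x := hφ x hx.1
      _ = ψ (ψ x) := by rw [hEq hfxm, hψ x hx.1]
  set d : ℕ → ℝ := fun n => ψ^[n] b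
  have hdS : ∀ n, d (n + 1) = ψ (d n) := fun n => iterate_succ_apply' ψ n b
  have hbd : ∀ n, b ≤ d n :=
    fun n => hψm.monotone_iterate_of_le_map (hψx₁.symm.trans_le (hψm hx₁)) (Nat.zero_le n)
  have hgrow : ∀ n, d n + h (ψ (f b)) ≤ d (n + 2) := by
    intro n
    rw [hdS, hdS, hψ _ (hx₁.trans (hbd n))]
    linarith [hgx _ (hbd n), hh (hψm (hfm (hbd n)))]
  have hall : ∀ n, EqOn φ ψ (Icc (f x₁) (d n)) := by
    intro n
    induction n with
    | zero => exact h0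
    | succ n ih => rw [hdS]; exact hstep _ (hx₁.trans (hbd n)) ih
  intro y hy
  obtain ⟨n, hn⟩ := exists_lt_of_add_le_add_two hd hgrow y
  exact hall n ⟨hy, hn.le⟩

section Backward

variable (ψ : ℝ → ℝ) (H : ℝ → ℝ → ℝ) (e : ℝ ≃o ℝ) (x₁ : ℝ)

noncomputable def backwardStep (φ : ℝ → ℝ) (t : ℝ) : ℝ :=
  if e x₁ ≤ t then ψ t else H (e.symm t) (φ (e.symm t))

variable {ψ H e x₁}

theorem backwardStep_apply {φ : ℝ → ℝ} (hφ : φ x₁ = ψ x₁) (hcompat : ψ (e x₁) = H x₁ (ψ x₁))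
    {x : ℝ} (hx : x ≤ x₁) : backwardStep ψ H e x₁ φ (e x) = H x (φ x) := by
  rw [backwardStep]
  split_ifs with hle
  · obtain rfl : x = x₁ := le_antisymm hx (e.le_iff_le.1 hle)
    rw [hcompat, hφ]
  · simp

theorem continuous_backwardStep (hψ : Continuous ψ) (hH : Continuous (uncurry H)) {φ : ℝ → ℝ}
    (hφc : Continuous φ) (hφ : φ x₁ = ψ x₁) (hcompat : ψ (e x₁) = H x₁ (ψ x₁)) :
    Continuous (backwardStep ψ H e x₁ φ) :=
  Continuous.if_le hψ (hH.comp (e.symm.continuous.prodMk (hφc.comp e.symm.continuous)))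
    continuous_const continuous_id fun t ht => by
      subst ht
      simp [hcompat, hφ]

theorem backwardStep_eqOn {φ φ' : ℝ → ℝ} {c : ℝ} (hφ : EqOn φ φ' (Ici c)) :
    EqOn (backwardStep ψ H e x₁ φ) (backwardStep ψ H e x₁ φ') (Ici (e c)) := by
  intro t ht
  simp only [backwardStep]
  split_ifs
  · rfl
  · rw [hφ (e.le_symm_apply.2 ht)]

theorem exists_backward_extension (hψ : Continuous ψ) (hH : Continuous (uncurry H))
    (hlt : ∀ x ≤ x₁, e x < x) (hcompat : ψ (e x₁) = H x₁ (ψ x₁)) :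
    ∃ φ : ℝ → ℝ, Continuous φ ∧ EqOn φ ψ (Ici (e x₁)) ∧ ∀ x ≤ x₁, φ (e x) = H x (φ x) := by
  set Φ : ℕ → ℝ → ℝ := fun n => (backwardStep ψ H e x₁)^[n] ψ
  have hΦS : ∀ n, Φ (n + 1) = backwardStep ψ H e x₁ (Φ n) := fun n => iterate_succ_apply' _ n ψ
  have hΦψ : ∀ n, EqOn (Φ n) ψ (Ici (e x₁)) := by
    rintro (_ | n) t ht
    · rfl
    · rw [hΦS]; exact if_pos ht
  have hΦx₁ : ∀ n, Φ n x₁ = ψ x₁ := fun n => hΦψ n (mem_Ici.2 (hlt x₁ le_rfl).le)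
  have hΦc : ∀ n, Continuous (Φ n) := by
    intro n
    induction n with
    | zero => exact hψ
    | succ n ih => rw [hΦS]; exact continuous_backwardStep hψ hH ih (hΦx₁ n) hcompat
  set a : ℕ → ℝ := fun n => e^[n] (e x₁)
  have haS : ∀ n, a (n + 1) = e (a n) := fun n => iterate_succ_apply' e n (e x₁)
  have ha : Antitone a :=
    e.monotone.antitone_iterate_of_map_le (hlt _ (hlt x₁ le_rfl).le).le
  have htend : Tendsto a atTop atBot := tendsto_iterate_atBot_of_map_lt e.continuous e.monotone
    fun x hx => hlt x (hx.trans (hlt x₁ le_rfl).le)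
  have hagree : ∀ n, EqOn (Φ (n + 1)) (Φ n) (Ici (a n)) := by
    intro n
    induction n with
    | zero => exact hΦψ 1
    | succ n ih =>
      have key := backwardStep_eqOn (ψ := ψ) (H := H) (e := e) (x₁ := x₁) ih
      rwa [← hΦS, ← hΦS, ← haS] at key
  obtain ⟨φ, hφ⟩ := exists_eqOn_of_eqOn_succ (s := fun n => Ici (a n))
    (fun m n hmn => Ici_subset_Ici.2 (ha hmn))
    (fun t => (htend.eventually (eventually_le_atBot t)).exists) hagree
  refine ⟨φ, continuous_of_eqOn_of_mem_nhds hΦc hφ fun t =>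
    (htend.eventually (eventually_lt_atBot t)).exists.imp fun n hn => Ici_mem_nhds hn,
    hφ 0, fun x hx => ?_⟩
  obtain ⟨n, hn⟩ := (htend.eventually (eventually_le_atBot x)).exists
  have hex : a (n + 1) ≤ e x := haS n ▸ e.monotone hn
  rw [hφ (n + 1) hex, hΦS, backwardStep_apply (hΦx₁ n) hcompat hx, hφ n hn]

end Backward

theorem exists_solution_Ici {h f g φ₀ φ₁ : ℝ → ℝ} {ξ₀ x₁ x₂ : ℝ} (hhc : Continuous h)
    (hfc : Continuous f) (hgc : Continuous g) (hhm : StrictMono h) (hfm : StrictMono f)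
    (hgm : StrictMono g) (hξ₀ : h ξ₀ = 0) (hfx : ∀ x, f x < x) (hfix : g x₁ = x₁)
    (hx₁l : ξ₀ < x₁) (hgx : ∀ x, x₁ ≤ x → x ≤ g x) (hx₂l : x₁ < x₂) (hx₂r : x₂ < h x₁ + x₁)
    (hφ₀m : StrictMonoOn φ₀ (Icc (f x₁) x₁)) (hφ₀s : φ₀ '' Icc (f x₁) x₁ = Icc x₁ x₂)
    (hφ₁m : StrictMonoOn φ₁ (Icc x₁ x₂)) (hφ₁s : φ₁ '' Icc x₁ x₂ = Icc x₂ (h x₁ + x₁)) :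
    ∃ ψ : ℝ → ℝ, Continuous ψ ∧ StrictMono ψ ∧ ψ (f x₁) = x₁ ∧ EqOn ψ φ₀ (Icc (f x₁) x₁) ∧
      EqOn ψ φ₁ (Icc x₁ x₂) ∧ (∀ x, x₁ ≤ x → ψ (ψ x) = h (ψ (f x)) + g x) ∧
      ∀ φ : ℝ → ℝ, EqOn φ φ₀ (Icc (f x₁) x₁) → EqOn φ φ₁ (Icc x₁ x₂) →
        (∀ x, x₁ ≤ x → φ (φ x) = h (φ (f x)) + g x) → EqOn φ ψ (Ici (f x₁)) := by
  have hx₀ : f x₁ ≤ x₁ := (hfx x₁).le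
  obtain ⟨Φ₀, hΦ₀, hΦ₁, hΦa, hΦx₁, hΦx₂⟩ :=
    exists_orderIso_eqOn_Icc_eqOn_Icc hx₀ hx₂l.le hφ₀m hφ₀s hφ₁m hφ₁s
  have hR : forwardExt h f g Φ₀ x₂ = Φ₀ x₂ := by
    rw [← hΦx₁, forwardExt_apply_apply, hΦa, hfix, hΦx₁, hΦx₂]
  have hd : 0 < h (Φ₀ (f x₂)) :=
    hξ₀ ▸ hhm (hx₁l.trans_le (hΦa ▸ Φ₀.monotone (hfm.monotone hx₂l.le)))
  have hgx₂ : ∀ x, x₂ ≤ x → x ≤ g x := fun x hx => hgx x (hx₂l.le.trans hx)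
  obtain ⟨ψ, hψc, hψm, hψΦ, hψeq⟩ := exists_forward_solution hhc hfc hgc hhm.monotone
    hfm.monotone hgm (fun x => (hfx x).le) hgx₂ (hΦx₂ ▸ hx₂r.le) hR hd
  have hψ₀ : EqOn ψ φ₀ (Icc (f x₁) x₁) := fun x hx => (hψΦ (hx.2.trans hx₂l.le)).trans (hΦ₀ hx)
  have hψ₁ : EqOn ψ φ₁ (Icc x₁ x₂) := fun x hx => (hψΦ hx.2).trans (hΦ₁ hx)
  have hψx₁ : ψ x₁ = x₂ := (hψΦ (mem_Iic.2 hx₂l.le)).trans hΦx₁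
  have hψeq' : ∀ x, x₁ ≤ x → ψ (ψ x) = h (ψ (f x)) + g x :=
    fun x hx => hψeq x (hψx₁ ▸ hψm.monotone hx)
  refine ⟨ψ, hψc, hψm, (hψΦ (mem_Iic.2 (hx₀.trans hx₂l.le))).trans hΦa, hψ₀, hψ₁, hψeq',
    fun φ hφ₀ hφ₁ hφeq => eqOn_Ici_of_eqOn_Icc_of_iterative_eq hhm.monotone hfm.monotone
      (fun x => (hfx x).le) hgx₂ hψc hψm.monotone hx₂l.le hψx₁
      (hψΦ (mem_Iic.2 (hfx x₂).le) ▸ hd) hψeq' hφeq fun x hx => ?_⟩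
  rcases le_total x x₁ with hxx₁ | hxx₁
  · exact (hφ₀ ⟨hx.1, hxx₁⟩).trans (hψ₀ ⟨hx.1, hxx₁⟩).symm
  · exact (hφ₁ ⟨hxx₁, hx.2⟩).trans (hψ₁ ⟨hxx₁, hx.2⟩).symm

theorem exists_solution_of_solution_Ici {h f g ψ : ℝ → ℝ} {ξ₀ x₁ : ℝ} (hfc : Continuous f)
    (hfm : StrictMono f) (hgc : Continuous g) (hgm : Monotone g) (hhm : StrictMono h)
    (hhs : Surjective h) (hξ₀ : h ξ₀ = 0) (hfx : ∀ x, f x < x) (hfix : g x₁ = x₁)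
    (hx₁r : f x₁ ≤ ξ₀) (hψc : Continuous ψ) (hψm : Monotone ψ) (hψf : ψ (f x₁) = x₁)
    (hψeq : ∀ x, x₁ ≤ x → ψ (ψ x) = h (ψ (f x)) + g x) :
    ∃ φ : ℝ → ℝ, Continuous φ ∧ EqOn φ ψ (Ici (f x₁)) ∧ (∀ t, f x₁ ≤ φ t) ∧
      ∀ x, φ (φ x) = h (φ (f x)) + g x := by
  set eh := hhm.orderIsoOfSurjective h hhs
  have heh : ∀ y, h (eh.symm y) = y := hhm.orderIsoOfSurjective_self_symm_apply h hhs
  obtain ⟨F, hF⟩ := exists_orderIso_eqOn_Iic (c := x₁) (hfm.strictMonoOn _) hfc.continuousOn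
    (tendsto_atBot_mono (fun x => (hfx x).le) tendsto_id)
  have hcompat : ψ (F x₁) = eh.symm (ψ (ψ x₁) - g x₁) := by
    rw [hF (mem_Iic.2 le_rfl), hψf, hψeq x₁ le_rfl, hψf, add_sub_cancel_right]
    exact (eh.symm_apply_apply x₁).symm
  obtain ⟨φ, hφc, hφψ, hφeq⟩ := exists_backward_extension (H := fun x y => eh.symm (ψ y - g x))
    hψc (eh.symm.continuous.comp ((hψc.comp continuous_snd).sub (hgc.comp continuous_fst)))
    (fun x hx => (hF hx).trans_lt (hfx x)) hcompat
  rw [hF (mem_Iic.2 le_rfl)] at hφψ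
  have hback : ∀ x ≤ x₁, h (φ (f x)) = ψ (φ x) - g x := fun x hx => by
    rw [← hF hx, hφeq x hx, heh]
  have hge : ∀ t, f x₁ ≤ φ t := by
    refine forall_of_forall_ge_of_map (c := x₁) hfc hfm.monotone (fun x _ => hfx x)
      (fun t ht => ?_) (fun x hx hφx => ?_)
    · rw [hφψ ht]
      exact (hfx x₁).le.trans (hψf ▸ hψm ht)
    · refine hx₁r.trans (hhm.le_iff_le.1 ?_)
      rw [hξ₀, hback x hx, sub_nonneg]
      exact (hgm hx).trans (hfix.trans_le (hψf ▸ hψm hφx))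
  refine ⟨φ, hφc, hφψ, hge, fun x => ?_⟩
  rw [hφψ (hge x)]
  rcases le_or_gt x₁ x with hx | hx
  · rw [hφψ ((hfx x₁).le.trans hx), hψeq x hx, hφψ (hfm.monotone hx)]
  · rw [hback x hx.le]
    ring

theorem eq_of_eqOn_Ici_of_iterative_eq {h f g φ φ' : ℝ → ℝ} {x₁ : ℝ} (hh : Injective h)
    (hfc : Continuous f) (hfm : Monotone f) (hfx : ∀ x ≤ x₁, f x < x)
    (hφ : ∀ x, φ (φ x) = h (φ (f x)) + g x) (hφ' : ∀ x, φ' (φ' x) = h (φ' (f x)) + g x)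
    (hge : ∀ t, f x₁ ≤ φ t)
    (h0 : EqOn φ' φ (Ici (f x₁))) : φ' = φ := by
  refine funext (forall_of_forall_ge_of_map hfc hfm hfx (fun t ht => h0 ht) fun x _ hx => hh ?_)
  have h1 := hφ' x
  have h2 := hφ x
  rw [hx, h0 (hge x)] at h1
  linarith

theorem stmt_18_general (h f g : ℝ → ℝ)
    (hhc : Continuous h) (hfc : Continuous f) (hgc : Continuous g)
    (hhm : StrictMono h) (hfm : StrictMono f) (hgm : StrictMono g)
    (hhs : Function.Surjective h)
    (ξ₀ : ℝ) (hξ₀ : h ξ₀ = 0)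
    (hfx : ∀ x : ℝ, f x < x)
    (x₁ : ℝ) (hfix : g x₁ = x₁) (hx₁l : ξ₀ < x₁) (hx₁r : f x₁ ≤ ξ₀)
    (hgx : ∀ x : ℝ, x₁ ≤ x → x ≤ g x)
    (x₂ : ℝ) (hx₂l : x₁ < x₂) (hx₂r : x₂ < h x₁ + x₁)
    (φ₀ φ₁ : ℝ → ℝ)
    (hφ₀m : StrictMonoOn φ₀ (Set.Icc (f x₁) x₁))
    (hφ₀s : φ₀ '' Set.Icc (f x₁) x₁ = Set.Icc x₁ x₂)
    (hφ₁m : StrictMonoOn φ₁ (Set.Icc x₁ x₂))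
    (hφ₁s : φ₁ '' Set.Icc x₁ x₂ = Set.Icc x₂ (h x₁ + x₁)) :
    ∃! φ : ℝ → ℝ, Continuous φ ∧
      (∀ x ∈ Set.Icc (f x₁) x₁, φ x = φ₀ x) ∧
      (∀ x ∈ Set.Icc x₁ x₂, φ x = φ₁ x) ∧
      ∀ x : ℝ, φ (φ x) = h (φ (f x)) + g x := by
  obtain ⟨ψ, hψc, hψm, hψf, hψ₀, hψ₁, hψeq, hψuniq⟩ := exists_solution_Ici hhc hfc hgc hhm hfm hgm
    hξ₀ hfx hfix hx₁l hgx hx₂l hx₂r hφ₀m hφ₀s hφ₁m hφ₁s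
  obtain ⟨φ, hφc, hφψ, hφge, hφeq⟩ := exists_solution_of_solution_Ici hfc hfm hgc hgm.monotone
    hhm hhs hξ₀ hfx hfix hx₁r hψc hψm.monotone hψf hψeq
  refine ⟨φ, ⟨hφc, fun x hx => (hφψ hx.1).trans (hψ₀ hx),
    fun x hx => (hφψ ((hfx x₁).le.trans hx.1)).trans (hψ₁ hx), hφeq⟩, ?_⟩
  rintro φ' ⟨-, hφ'₀, hφ'₁, hφ'eq⟩
  have hφ'ψ := hψuniq φ' (fun x hx => hφ'₀ x hx) (fun x hx => hφ'₁ x hx) fun x _ => hφ'eq x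
  exact eq_of_eqOn_Ici_of_iterative_eq hhm.injective hfc hfm.monotone (fun x _ => hfx x) hφeq
    hφ'eq hφge fun t ht => (hφ'ψ ht).trans (hφψ ht).symm

theorem stmt_18 (h f g : ℝ → ℝ)
    (hhc : Continuous h) (hfc : Continuous f) (hgc : Continuous g)
    (hhm : StrictMono h) (hfm : StrictMono f) (hgm : StrictMono g)
    (hhs : Function.Surjective h)
    (ξ₀ : ℝ) (hξ₀ : h ξ₀ = 0)
    (hfx : ∀ x : ℝ, f x < x)
    (x₁ : ℝ) (hfix : g x₁ = x₁) (hx₁l : ξ₀ < x₁) (hx₁r : f x₁ ≤ ξ₀)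
    (hgx : ∀ x : ℝ, x₁ ≤ x → x ≤ g x)
    (x₂ : ℝ) (hx₂l : x₁ < x₂) (hx₂r : x₂ < h x₁ + x₁)
    (φ₀ φ₁ : ℝ → ℝ)
    (hφ₀m : StrictMonoOn φ₀ (Set.Icc (f x₁) x₁))
    (hφ₀c : ContinuousOn φ₀ (Set.Icc (f x₁) x₁))
    (hφ₀s : φ₀ '' Set.Icc (f x₁) x₁ = Set.Icc x₁ x₂)
    (hφ₁m : StrictMonoOn φ₁ (Set.Icc x₁ x₂))
    (hφ₁c : ContinuousOn φ₁ (Set.Icc x₁ x₂))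
    (hφ₁s : φ₁ '' Set.Icc x₁ x₂ = Set.Icc x₂ (h x₁ + x₁)) :
    ∃! φ : ℝ → ℝ, Continuous φ ∧
      (∀ x ∈ Set.Icc (f x₁) x₁, φ x = φ₀ x) ∧
      (∀ x ∈ Set.Icc x₁ x₂, φ x = φ₁ x) ∧
      ∀ x : ℝ, φ (φ x) = h (φ (f x)) + g x :=
  stmt_18_general h f g hhc hfc hgc hhm hfm hgm hhs ξ₀ hξ₀ hfx x₁ hfix hx₁l hx₁r hgx x₂ hx₂l hx₂r φ₀
    φ₁ hφ₀m hφ₀s hφ₁m hφ₁s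
end
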